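/- arXiv:1208.1091 — 9 statements merged into one kernel-verified Lean document; each statement's English description precedes it below -/
import Mathlib

section
/- Let n ≥ 3 and let a_1,…,a_n and b_1,…,b_n be two families of strictly positive real numbers. If for every index k (1 ≤ k ≤ n) one has a_k · (∑_{j≠k} a_j) = b_k · (∑_{j≠k} b_j), then a_k = b_k for every k. -/
private lemma sum_pair_lt' {n : ℕ} (hn : 3 ≤ n) (a : Fin n → ℝ) (ha : ∀ k, 0 < a k)
    {k l : Fin n} (hkl : k ≠ l) : a k + a l < ∑ j, a j := by
  obtain ⟨m, hm⟩ : ∃ m, m ∉ ({k, l} : Finset (Fin n)) := by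
    by_contra hc
    push_neg at hc
    have hsub : (Finset.univ : Finset (Fin n)) ⊆ {k, l} := fun x _ => hc x
    have := Finset.card_le_card hsub
    have h2 : ({k, l} : Finset (Fin n)).card ≤ 2 := Finset.card_insert_le _ _ |>.trans (by simp)
    simp [Finset.card_univ] at this
    omega
  have := Finset.sum_lt_sum_of_subset (Finset.subset_univ ({k, l} : Finset (Fin n)))
    (Finset.mem_univ m) hm (ha m) (fun j _ _ => (ha j).le)
  rwa [Finset.sum_pair hkl] at this

private lemma key_not_lt {n : ℕ} (hn : 3 ≤ n) (a b : Fin n → ℝ)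
    (ha : ∀ k, 0 < a k) (hb : ∀ k, 0 < b k)
    (h : ∀ k, a k * ((∑ j, a j) - a k) = b k * ((∑ j, b j) - b k)) :
    ¬ (∑ j, b j < ∑ j, a j) := by
  intro hTS
  set S := ∑ j, a j with hS
  set T := ∑ j, b j with hT
  have stepA : ∀ k, (a k - b k) * (S - a k - b k) < 0 := by
    intro k
    nlinarith [h k, mul_pos (hb k) (sub_pos.mpr hTS)]
  -- there is a unique k0 with b k0 < a k0
  have hP : ∀ k l, k ≠ l → b k < a k → b l < a l → False := by
    intro k l hkl hk hl
    have h1 : S < a k + b k := by nlinarith [stepA k]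
    have h2 : S < a l + b l := by nlinarith [stepA l]
    have p1 : a k + a l < S := sum_pair_lt' hn a ha hkl
    have p2 : b k + b l < T := sum_pair_lt' hn b hb hkl
    linarith
  obtain ⟨k0, hk0⟩ : ∃ k0, b k0 < a k0 := by
    by_contra hc
    push_neg at hc
    have : S ≤ T := Finset.sum_le_sum (fun j _ => hc j)
    linarith
  have hlt : ∀ l, l ≠ k0 → a l < b l := by
    intro l hl
    rcases lt_trichotomy (a l) (b l) with h1 | h1 | h1
    · exact h1
    · exfalso; have := stepA l; rw [h1] at this; simp at this
    · exact absurd (hP l k0 hl h1 hk0) (fun x => x)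
  set s : Finset (Fin n) := Finset.univ \ {k0} with hs
  have hmem : ∀ l, l ∈ s ↔ l ≠ k0 := by
    intro l; simp [hs]
  have hcard : s.card = n - 1 := by
    rw [hs, Finset.card_sdiff_of_subset (Finset.subset_univ _)]
    simp [Finset.card_univ]
  set A := ∑ l ∈ s, a l with hA
  set B := ∑ l ∈ s, b l with hB
  have hSA : S = a k0 + A := by
    rw [hS, hA, hs, Finset.sum_sdiff_eq_sub (Finset.subset_univ _), Finset.sum_singleton]
    ring
  have hTB : T = b k0 + B := by
    rw [hT, hB, hs, Finset.sum_sdiff_eq_sub (Finset.subset_univ _), Finset.sum_singleton]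
    ring
  have hk0eq : a k0 * A = b k0 * B := by
    have := h k0
    rw [hSA, hTB] at this
    linarith [this]
  have hsum_a : ∑ l ∈ s, a l * (S - a l) = a k0 * A + ∑ l ∈ s, a l * (A - a l) := by
    have : ∀ l ∈ s, a l * (S - a l) = a k0 * a l + a l * (A - a l) := by
      intro l _; rw [hSA]; ring
    rw [Finset.sum_congr rfl this, Finset.sum_add_distrib, ← Finset.mul_sum, ← hA]
  have hsum_b : ∑ l ∈ s, b l * (T - b l) = b k0 * B + ∑ l ∈ s, b l * (B - b l) := by
    have : ∀ l ∈ s, b l * (T - b l) = b k0 * b l + b l * (B - b l) := by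
      intro l _; rw [hTB]; ring
    rw [Finset.sum_congr rfl this, Finset.sum_add_distrib, ← Finset.mul_sum, ← hB]
  have heq : ∑ l ∈ s, a l * (A - a l) = ∑ l ∈ s, b l * (B - b l) := by
    have h1 : ∑ l ∈ s, a l * (S - a l) = ∑ l ∈ s, b l * (T - b l) :=
      Finset.sum_congr rfl (fun l _ => h l)
    rw [hsum_a, hsum_b, hk0eq] at h1
    linarith
  have hne : s.Nonempty := by
    rw [← Finset.card_pos, hcard]; omega
  have hstrict : ∑ l ∈ s, a l * (A - a l) < ∑ l ∈ s, b l * (B - b l) := by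
    apply Finset.sum_lt_sum_of_nonempty hne
    intro l hl
    have hlk0 : l ≠ k0 := (hmem l).mp hl
    have hErase : (s.erase l).Nonempty := by
      rw [← Finset.card_pos, Finset.card_erase_of_mem hl, hcard]; omega
    have hAa : A - a l = ∑ m ∈ s.erase l, a m := by
      rw [hA, ← Finset.add_sum_erase s a hl]; ring
    have hBb : B - b l = ∑ m ∈ s.erase l, b m := by
      rw [hB, ← Finset.add_sum_erase s b hl]; ring
    have h1 : A - a l < B - b l := by
      rw [hAa, hBb]
      apply Finset.sum_lt_sum_of_nonempty hErase
      intro m hm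
      exact hlt m ((hmem m).mp (Finset.mem_of_mem_erase hm))
    have h2 : 0 < A - a l := by
      rw [hAa]
      exact Finset.sum_pos (fun m _ => ha m) hErase
    exact mul_lt_mul'' (hlt l hlk0) h1 (ha l).le h2.le
  linarith

/-- Lemma 2 of the paper: if two families of positive reals `a`, `b` (with `n ≥ 3` members)
satisfy `a k * ∑_{j ≠ k} a j = b k * ∑_{j ≠ k} b j` for every `k`, then `a k = b k` for all `k`. -/
theorem w_type_key_lemma (n : ℕ) (hn : 3 ≤ n) (a b : Fin n → ℝ)
    (ha : ∀ k, 0 < a k) (hb : ∀ k, 0 < b k)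
    (h : ∀ k, a k * ∑ j ∈ Finset.univ \ {k}, a j = b k * ∑ j ∈ Finset.univ \ {k}, b j) :
    ∀ k, a k = b k := by
  have hsum : ∀ (c : Fin n → ℝ) (k : Fin n),
      ∑ j ∈ Finset.univ \ {k}, c j = (∑ j, c j) - c k := by
    intro c k
    rw [Finset.sum_sdiff_eq_sub (Finset.subset_univ _), Finset.sum_singleton]
  have h' : ∀ k, a k * ((∑ j, a j) - a k) = b k * ((∑ j, b j) - b k) := by
    intro k; rw [← hsum a k, ← hsum b k]; exact h k
  have h'' : ∀ k, b k * ((∑ j, b j) - b k) = a k * ((∑ j, a j) - a k) :=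
    fun k => (h' k).symm
  have hST : ∑ j, a j = ∑ j, b j :=
    le_antisymm (not_lt.mp (key_not_lt hn a b ha hb h'))
      (not_lt.mp (key_not_lt hn b a hb ha h''))
  set S := ∑ j, a j with hS
  have hzero : ∀ k, (a k - b k) * (S - a k - b k) = 0 := by
    intro k
    have hk := h' k
    rw [← hST] at hk
    linear_combination hk
  intro k
  by_contra hne
  have h1 : a k + b k = S := by
    rcases mul_eq_zero.mp (hzero k) with hx | hx
    · exact absurd (sub_eq_zero.mp hx) hne
    · linarith
  have hone : ∀ l, l ≠ k → a l = b l := by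
    intro l hl
    by_contra hne2
    have h2 : a l + b l = S := by
      rcases mul_eq_zero.mp (hzero l) with hx | hx
      · exact absurd (sub_eq_zero.mp hx) hne2
      · linarith
    have p1 : a k + a l < S := sum_pair_lt' hn a ha (Ne.symm hl)
    have p2 : b k + b l < ∑ j, b j := sum_pair_lt' hn b hb (Ne.symm hl)
    rw [← hST] at p2
    linarith
  have hda : S = a k + ∑ l ∈ Finset.univ \ {k}, a l := by
    rw [hsum a k]; ring
  have hdb : S = b k + ∑ l ∈ Finset.univ \ {k}, b l := by
    rw [hST, hsum b k]; ring
  have hrest : ∑ l ∈ Finset.univ \ {k}, a l = ∑ l ∈ Finset.univ \ {k}, b l := by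
    apply Finset.sum_congr rfl
    intro l hl
    simp only [Finset.mem_sdiff, Finset.mem_singleton] at hl
    exact hone l hl.2
  exact hne (by linarith)
end

section
/- Let n ≥ 3 and let x_1,…,x_n be strictly positive real numbers. Define f(y) = −2y + ∑_{k=1}^n x_k / (y + √(y² − x_k)). Then f is strictly decreasing on the interval [√(max_k x_k), ∞); in particular, f has at most one zero in this interval (if f(r) = f(r') = 0 with r, r' ≥ √(max_k x_k), then r = r'). -/
/-!
Each summand `c / (y + √(y² - c))` with `c ≥ 0` has a nonnegative numerator and a
denominator that is positive and nondecreasing for `y > 0`, so it is antitone there; adding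
the strictly decreasing `-2 y` makes `f` strictly decreasing on `(0, ∞)`, which contains
`[√(max_k x k), ∞)` because the `x k` are positive.
-/

open Finset Set

lemma add_sqrt_sq_sub_monotoneOn (c : ℝ) :
    MonotoneOn (fun y : ℝ => y + √(y ^ 2 - c)) (Ioi 0) := by
  intro a ha b _ hab
  have hsq : a ^ 2 - c ≤ b ^ 2 - c := by gcongr; exact (mem_Ioi.mp ha).le
  exact add_le_add hab (Real.sqrt_le_sqrt hsq)

lemma div_add_sqrt_sq_sub_antitoneOn {c : ℝ} (hc : 0 ≤ c) :
    AntitoneOn (fun y : ℝ => c / (y + √(y ^ 2 - c))) (Ioi 0) := by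
  intro a ha b hb hab
  have hpos : 0 < a + √(a ^ 2 - c) := add_pos_of_pos_of_nonneg ha (Real.sqrt_nonneg _)
  exact div_le_div_of_nonneg_left hc hpos (add_sqrt_sq_sub_monotoneOn c ha hb hab)

lemma strictAntiOn_neg_two_mul_add_sum_div_add_sqrt {ι : Type*} (s : Finset ι) {x : ι → ℝ}
    (hx : ∀ k ∈ s, 0 ≤ x k) :
    StrictAntiOn (fun y : ℝ => -2 * y + ∑ k ∈ s, x k / (y + √(y ^ 2 - x k))) (Ioi 0) := by
  have hlin : StrictAntiOn (fun y : ℝ => -2 * y) (Ioi 0) :=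
    fun a _ b _ hab => by linarith
  refine hlin.add_antitone fun a ha b hb hab => sum_le_sum fun k hk => ?_
  exact div_add_sqrt_sq_sub_antitoneOn (hx k hk) ha hb hab

/-- For positive reals `x 1, …, x n` (`n ≥ 3`), the function
`f y = -2 y + ∑_{k=1}^n x k / (y + √(y² - x k))` is strictly decreasing on
`[√(max_k x k), ∞)`; in particular it has at most one zero in that interval. -/
theorem f_strictAnti_and_unique_zero (n : ℕ) (hn : 3 ≤ n) (x : ℕ → ℝ)
    (hx : ∀ k ∈ Finset.Icc 1 n, 0 < x k)
    (f : ℝ → ℝ)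
    (hf : ∀ y, f y = -2 * y + ∑ k ∈ Finset.Icc 1 n, x k / (y + Real.sqrt (y ^ 2 - x k)))
    (M : ℝ) (hM : M = (Finset.Icc 1 n).sup' (Finset.nonempty_Icc.mpr (by omega)) x) :
    StrictAntiOn f (Set.Ici (Real.sqrt M)) ∧
      ∀ r ∈ Set.Ici (Real.sqrt M), ∀ r' ∈ Set.Ici (Real.sqrt M),
        f r = 0 → f r' = 0 → r = r' := by
  have h1 : 1 ∈ Finset.Icc 1 n := mem_Icc.mpr ⟨le_rfl, by omega⟩
  have hM_pos : 0 < M := hM ▸ (hx 1 h1).trans_le (le_sup' x h1)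
  have hIci : Ici √M ⊆ Ioi 0 := fun y hy => (Real.sqrt_pos.mpr hM_pos).trans_le hy
  have hanti : StrictAntiOn f (Ici √M) := by
    rw [funext hf]
    exact (strictAntiOn_neg_two_mul_add_sum_div_add_sqrt _ fun k hk => (hx k hk).le).mono hIci
  exact ⟨hanti, fun r hr r' hr' h h' => hanti.injOn hr hr' (h.trans h'.symm)⟩
end

section
/- Let n ≥ 3 and let x_1,…,x_n be strictly positive real numbers. Define g(y) = ∑_{k=2}^n √(y² − x_k) − √(y² − x_1) − (n−2)y. If s > 0 satisfies s² ≥ x_k for all k and g(s) = 0, then x_1 ≥ x_k for every k (i.e., x_1 = max_k x_k). -/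
/-- If `s > 0` with `s² ≥ x k` for all `k` is a zero of
`g y = ∑_{k=2}^n √(y² - x k) - √(y² - x 1) - (n-2) y` (where the `x k` are positive, `n ≥ 3`),
then `x 1` is the maximum of the `x k`. -/
theorem zero_of_g_forces_x1_max (n : ℕ) (hn : 3 ≤ n) (x : ℕ → ℝ)
    (hx : ∀ k ∈ Finset.Icc 1 n, 0 < x k)
    (s : ℝ) (hs : 0 < s) (hsx : ∀ k ∈ Finset.Icc 1 n, x k ≤ s ^ 2)
    (hg : (∑ k ∈ Finset.Icc 2 n, Real.sqrt (s ^ 2 - x k)) - Real.sqrt (s ^ 2 - x 1)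
        - (n - 2 : ℝ) * s = 0) :
    ∀ k ∈ Finset.Icc 1 n, x k ≤ x 1 := by
  intro k hk
  by_contra hlt
  push_neg at hlt
  have h1 : (1 : ℕ) ∈ Finset.Icc 1 n := by
    simp [Finset.mem_Icc]; omega
  rw [Finset.mem_Icc] at hk
  -- k ≠ 1 since x 1 < x k
  have hk1 : k ≠ 1 := by rintro rfl; exact lt_irrefl _ hlt
  have hk2 : k ∈ Finset.Icc 2 n := by rw [Finset.mem_Icc]; omega
  -- each term with j ∈ Icc 1 n is ≤ s
  have hterm : ∀ j ∈ Finset.Icc 1 n, Real.sqrt (s ^ 2 - x j) ≤ s := by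
    intro j hj
    calc Real.sqrt (s ^ 2 - x j) ≤ Real.sqrt (s ^ 2) := by
          apply Real.sqrt_le_sqrt; linarith [hx j hj]
      _ = s := by rw [Real.sqrt_sq hs.le]
  -- the k-th term is strictly less than √(s² - x 1)
  have hkey : Real.sqrt (s ^ 2 - x k) < Real.sqrt (s ^ 2 - x 1) := by
    apply Real.sqrt_lt_sqrt
    · have := hsx k (by rw [Finset.mem_Icc]; omega); linarith
    · linarith
  -- bound the remaining sum
  have hsub : (Finset.Icc 2 n).card = n - 1 := by
    rw [Nat.card_Icc]; omega
  have hcard : ((Finset.Icc 2 n).erase k).card = n - 2 := by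
    rw [Finset.card_erase_of_mem hk2, hsub]; omega
  have hrest : ∑ j ∈ (Finset.Icc 2 n).erase k, Real.sqrt (s ^ 2 - x j)
      ≤ ((n : ℝ) - 2) * s := by
    have := Finset.sum_le_card_nsmul ((Finset.Icc 2 n).erase k)
      (fun j => Real.sqrt (s ^ 2 - x j)) s (by
        intro j hj
        have hj' := Finset.mem_of_mem_erase hj
        rw [Finset.mem_Icc] at hj'
        exact hterm j (by rw [Finset.mem_Icc]; omega))
    rw [hcard, nsmul_eq_mul] at this
    have hc : ((n - 2 : ℕ) : ℝ) = (n : ℝ) - 2 := by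
      rw [Nat.cast_sub (by omega)]; norm_num
    rw [hc] at this
    exact this
  -- split the sum
  have hsplit : ∑ j ∈ Finset.Icc 2 n, Real.sqrt (s ^ 2 - x j)
      = Real.sqrt (s ^ 2 - x k) + ∑ j ∈ (Finset.Icc 2 n).erase k, Real.sqrt (s ^ 2 - x j) :=
    (Finset.add_sum_erase _ _ hk2).symm
  linarith [hsplit, hrest, hkey]
end

section
/- Let n ≥ 3, let l > 0 and M > 0 be real numbers, and let z_2,…,z_n be real numbers with 0 ≤ z_k ≤ M for every k and ∑_{k=2}^n z_k < (n−2)·M. Then ∑_{k=2}^n √(l² + z_k²) < l + (n−2)·√(l² + M²). -/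
/-- Convexity inequality used in Case 1 of the proof of Lemma 2: if `0 ≤ z k ≤ M` for
`k = 2, …, n` and `∑_{k=2}^n z k < (n-2) M`, then
`∑_{k=2}^n √(l² + (z k)²) < l + (n-2) √(l² + M²)` for any `l > 0`. -/
theorem sqrt_sum_lt_of_sum_lt (n : ℕ) (hn : 3 ≤ n) (l M : ℝ) (hl : 0 < l) (hM : 0 < M)
    (z : ℕ → ℝ) (hz : ∀ k ∈ Finset.Icc 2 n, 0 ≤ z k ∧ z k ≤ M)
    (hsum : ∑ k ∈ Finset.Icc 2 n, z k < (n - 2 : ℝ) * M) :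
    ∑ k ∈ Finset.Icc 2 n, Real.sqrt (l ^ 2 + z k ^ 2)
      < l + (n - 2 : ℝ) * Real.sqrt (l ^ 2 + M ^ 2) := by
  set s := Real.sqrt (l ^ 2 + M ^ 2) with hs
  have hs0 : 0 ≤ s := Real.sqrt_nonneg _
  have hs2 : s ^ 2 = l ^ 2 + M ^ 2 := Real.sq_sqrt (by positivity)
  have hsl : l < s := by nlinarith
  set c := (s - l) / M with hc
  have hc0 : 0 < c := div_pos (by linarith) hM
  have hc1 : c < 1 := by
    rw [hc, div_lt_one hM]
    nlinarith
  have h2lc : 2 * l * c = (1 - c ^ 2) * M := by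
    rw [hc]; field_simp; nlinarith
  have key : ∀ k ∈ Finset.Icc 2 n, Real.sqrt (l ^ 2 + z k ^ 2) ≤ l + c * z k := by
    intro k hk
    obtain ⟨h0, h1⟩ := hz k hk
    have hrhs : 0 ≤ l + c * z k := by positivity
    have hle : l ^ 2 + z k ^ 2 ≤ (l + c * z k) ^ 2 := by
      nlinarith [mul_nonneg h0 (mul_nonneg (by nlinarith : (0:ℝ) ≤ 1 - c ^ 2)
        (by linarith : 0 ≤ M - z k))]
    calc Real.sqrt (l ^ 2 + z k ^ 2) ≤ Real.sqrt ((l + c * z k) ^ 2) :=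
          Real.sqrt_le_sqrt hle
      _ = l + c * z k := Real.sqrt_sq hrhs
  have hsum2 : ∑ k ∈ Finset.Icc 2 n, Real.sqrt (l ^ 2 + z k ^ 2)
      ≤ ∑ k ∈ Finset.Icc 2 n, (l + c * z k) := Finset.sum_le_sum key
  rw [Finset.sum_add_distrib, Finset.sum_const, ← Finset.mul_sum] at hsum2
  have hcardR : ((Finset.Icc 2 n).card : ℝ) = (n : ℝ) - 1 := by
    rw [Nat.card_Icc, show n + 1 - 2 = n - 1 from rfl,
      Nat.cast_sub (by omega : 1 ≤ n)]
    push_cast; ring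
  rw [nsmul_eq_mul, hcardR] at hsum2
  have hmul := mul_lt_mul_of_pos_left hsum hc0
  have hcM : c * ((n - 2 : ℝ) * M) = (n - 2 : ℝ) * (s - l) := by
    rw [hc]; field_simp
  have hn3 : (3 : ℝ) ≤ (n : ℝ) := by exact_mod_cast hn
  nlinarith
end

section
/- Let n ≥ 3, let t > 0 and s > 0 be real numbers, let c be a real number with 0 ≤ c ≤ s, and let w_2,…,w_n be real numbers with 0 ≤ w_k < s for every k and ∑_{k=2}^n w_k = (n−2)·s + c. Then ∑_{k=2}^n √(t + w_k²) < √(t + c²) + (n−2)·√(t + s²). -/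
/-- Chord inequality for the strictly convex function `x ↦ √(t + x²)` on `[a, b]`. -/
lemma sqrt_chord_lt (t : ℝ) (ht : 0 < t) {a b x : ℝ} (ha : 0 ≤ a) (hax : a < x)
    (hxb : x < b) :
    Real.sqrt (t + x ^ 2)
      < ((b - x) * Real.sqrt (t + a ^ 2) + (x - a) * Real.sqrt (t + b ^ 2)) / (b - a) := by
  have hb : 0 < b := lt_of_le_of_lt ha (hax.trans hxb)
  have hba : 0 < b - a := by linarith
  set A := Real.sqrt (t + a ^ 2) with hA
  set B := Real.sqrt (t + b ^ 2) with hB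
  have hA2 : A ^ 2 = t + a ^ 2 := Real.sq_sqrt (by positivity)
  have hB2 : B ^ 2 = t + b ^ 2 := Real.sq_sqrt (by positivity)
  have hA0 : 0 ≤ A := Real.sqrt_nonneg _
  have hB0 : 0 ≤ B := Real.sqrt_nonneg _
  have hab0 : 0 ≤ t + a * b := by positivity
  have hAB : t + a * b < A * B := by
    have hABsq : (A * B) ^ 2 = (t + a ^ 2) * (t + b ^ 2) := by
      rw [mul_pow, hA2, hB2]
    have hab_neg : a - b < 0 := by linarith
    have habsq : 0 < (a - b) ^ 2 := by nlinarith [mul_pos_of_neg_of_neg hab_neg hab_neg]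
    refine lt_of_pow_lt_pow_left₀ 2 (mul_nonneg hA0 hB0) ?_
    rw [hABsq]
    nlinarith [mul_pos ht habsq]
  rw [lt_div_iff₀ hba]
  have hX2 : (Real.sqrt (t + x ^ 2)) ^ 2 = t + x ^ 2 := Real.sq_sqrt (by positivity)
  have hX0 : 0 ≤ Real.sqrt (t + x ^ 2) := Real.sqrt_nonneg _
  have hrhs : 0 ≤ (b - x) * A + (x - a) * B := by
    have := mul_nonneg (le_of_lt (show (0:ℝ) < b - x by linarith)) hA0
    have := mul_nonneg (le_of_lt (show (0:ℝ) < x - a by linarith)) hB0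
    linarith
  refine lt_of_pow_lt_pow_left₀ 2 hrhs ?_
  have hp : 0 < b - x := by linarith
  have hq : 0 < x - a := by linarith
  have expand : (Real.sqrt (t + x ^ 2) * (b - a)) ^ 2 = (t + x ^ 2) * (b - a) ^ 2 := by
    rw [mul_pow, hX2]
  have e1 : ((b - x) * A + (x - a) * B) ^ 2
      = (b - x) ^ 2 * A ^ 2 + (x - a) ^ 2 * B ^ 2 + 2 * (b - x) * (x - a) * (A * B) := by
    ring
  rw [expand, e1, hA2, hB2]
  nlinarith [mul_pos (mul_pos hp hq) (sub_pos.mpr hAB)]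

/-- Strict-convexity inequality used in the uniqueness-of-root argument for `g`:
if `0 ≤ w k < s` for `k = 2, …, n`, `0 ≤ c ≤ s` and `∑_{k=2}^n w k = (n-2) s + c`, then
`∑_{k=2}^n √(t + (w k)²) < √(t + c²) + (n-2) √(t + s²)` for any `t > 0`. -/
theorem sqrt_sum_lt_of_sum_eq (n : ℕ) (hn : 3 ≤ n) (t s : ℝ) (ht : 0 < t) (hs : 0 < s)
    (c : ℝ) (hc0 : 0 ≤ c) (hcs : c ≤ s)
    (w : ℕ → ℝ) (hw : ∀ k ∈ Finset.Icc 2 n, 0 ≤ w k ∧ w k < s)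
    (hsum : ∑ k ∈ Finset.Icc 2 n, w k = (n - 2 : ℝ) * s + c) :
    ∑ k ∈ Finset.Icc 2 n, Real.sqrt (t + w k ^ 2)
      < Real.sqrt (t + c ^ 2) + (n - 2 : ℝ) * Real.sqrt (t + s ^ 2) := by
  have hcard : (Finset.Icc 2 n).card = n - 1 := by
    rw [Nat.card_Icc]; omega
  have hne : (Finset.Icc 2 n).Nonempty := by
    refine ⟨2, ?_⟩; simp [Finset.mem_Icc]; omega
  have hcardR : ((Finset.Icc 2 n).card : ℝ) = (n : ℝ) - 1 := by
    rw [hcard, Nat.cast_sub (by omega)]; norm_num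
  -- total sum strict upper bound
  have htot : ∑ k ∈ Finset.Icc 2 n, w k < ((n : ℝ) - 1) * s := by
    calc ∑ k ∈ Finset.Icc 2 n, w k < ∑ k ∈ Finset.Icc 2 n, s :=
          Finset.sum_lt_sum_of_nonempty hne (fun k hk => (hw k hk).2)
      _ = ((n : ℝ) - 1) * s := by rw [Finset.sum_const, nsmul_eq_mul, hcardR]
  -- c < s
  have hcs' : c < s := by
    by_contra h
    push_neg at h
    have : c = s := le_antisymm hcs h
    rw [hsum, this] at htot
    linarith
  -- every w k is strictly greater than c
  have hwc : ∀ k ∈ Finset.Icc 2 n, c < w k := by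
    intro k hk
    have herase : ∑ j ∈ (Finset.Icc 2 n).erase k, w j < ((n : ℝ) - 2) * s := by
      have hcarde : ((Finset.Icc 2 n).erase k).card = n - 2 := by
        rw [Finset.card_erase_of_mem hk, hcard]
        omega
      have hne2 : ((Finset.Icc 2 n).erase k).Nonempty := by
        rw [← Finset.card_pos, hcarde]; omega
      calc ∑ j ∈ (Finset.Icc 2 n).erase k, w j
          < ∑ j ∈ (Finset.Icc 2 n).erase k, s :=
            Finset.sum_lt_sum_of_nonempty hne2
              (fun j hj => (hw j (Finset.mem_of_mem_erase hj)).2)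
        _ = ((n : ℝ) - 2) * s := by
            rw [Finset.sum_const, nsmul_eq_mul, hcarde, Nat.cast_sub (by omega)]
            norm_num
    have hsplit : w k + ∑ j ∈ (Finset.Icc 2 n).erase k, w j
        = ∑ j ∈ Finset.Icc 2 n, w j := Finset.add_sum_erase _ w hk
    rw [hsum] at hsplit
    linarith
  -- per-term chord bound and summation
  have hmain : ∑ k ∈ Finset.Icc 2 n, Real.sqrt (t + w k ^ 2)
      < ∑ k ∈ Finset.Icc 2 n,
          (((s - w k) * Real.sqrt (t + c ^ 2) + (w k - c) * Real.sqrt (t + s ^ 2)) / (s - c)) := by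
    refine Finset.sum_lt_sum_of_nonempty hne (fun k hk => ?_)
    exact sqrt_chord_lt t ht hc0 (hwc k hk) (hw k hk).2
  refine hmain.trans_le (le_of_eq ?_)
  rw [← Finset.sum_div]
  have hnum : ∑ k ∈ Finset.Icc 2 n,
      ((s - w k) * Real.sqrt (t + c ^ 2) + (w k - c) * Real.sqrt (t + s ^ 2))
      = (s - c) * Real.sqrt (t + c ^ 2) + ((n : ℝ) - 2) * (s - c) * Real.sqrt (t + s ^ 2) := by
    rw [Finset.sum_add_distrib, ← Finset.sum_mul, ← Finset.sum_mul,
      Finset.sum_sub_distrib, Finset.sum_sub_distrib, Finset.sum_const, Finset.sum_const,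
      nsmul_eq_mul, nsmul_eq_mul, hcardR, hsum]
    ring
  rw [hnum]
  have hsc : s - c ≠ 0 := by linarith
  field_simp
end

section
/- Let n ≥ 3 and let x_1,…,x_n be strictly positive real numbers with x_1 ≥ x_k for every k. Define g(y) = ∑_{k=2}^n √(y² − x_k) − √(y² − x_1) − (n−2)y. If s_0 ≥ √(x_1) and s_1 ≥ √(x_1) satisfy g(s_0) = 0 and g(s_1) = 0, then s_0 = s_1. In other words, g has at most one zero in the interval [√(x_1), ∞). -/
private noncomputable def psi (t w : ℝ) : ℝ := Real.sqrt (w ^ 2 + t) - w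

private lemma psi_zero (w : ℝ) (hw : 0 ≤ w) : psi 0 w = 0 := by
  simp [psi, Real.sqrt_sq hw]

private lemma psi_denom_pos (t w : ℝ) (ht : 0 < t) : 0 < Real.sqrt (w ^ 2 + t) + w := by
  have h : |w| < Real.sqrt (w ^ 2 + t) := by
    rw [← Real.sqrt_sq_eq_abs]
    exact Real.sqrt_lt_sqrt (sq_nonneg w) (by linarith)
  have := neg_abs_le w
  linarith

private lemma psi_pos (t w : ℝ) (ht : 0 < t) (hw : 0 ≤ w) : 0 < psi t w := by
  have h : Real.sqrt (w ^ 2) < Real.sqrt (w ^ 2 + t) :=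
    Real.sqrt_lt_sqrt (sq_nonneg w) (by linarith)
  rw [Real.sqrt_sq hw] at h
  simpa [psi] using sub_pos.mpr h

private lemma psi_eq_div (t w : ℝ) (ht : 0 < t) :
    psi t w = t / (Real.sqrt (w ^ 2 + t) + w) := by
  rw [eq_div_iff (psi_denom_pos t w ht).ne']
  have h : Real.sqrt (w ^ 2 + t) ^ 2 = w ^ 2 + t := Real.sq_sqrt (by positivity)
  unfold psi
  linear_combination h

private lemma key (t s w₀ w₁ : ℝ) (ht : 0 < t) (hts : t < s) (hw0 : 0 ≤ w₀)
    (hw : w₀ < w₁) : psi t w₁ * psi s w₀ < psi t w₀ * psi s w₁ := by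
  have hs : 0 < s := ht.trans hts
  have hw1 : 0 ≤ w₁ := hw0.trans hw.le
  set A₀ := Real.sqrt (w₀ ^ 2 + t) with hA₀def
  set A₁ := Real.sqrt (w₁ ^ 2 + t) with hA₁def
  set B₀ := Real.sqrt (w₀ ^ 2 + s) with hB₀def
  set B₁ := Real.sqrt (w₁ ^ 2 + s) with hB₁def
  have hA₀ : A₀ ^ 2 = w₀ ^ 2 + t := Real.sq_sqrt (by positivity)
  have hA₁ : A₁ ^ 2 = w₁ ^ 2 + t := Real.sq_sqrt (by positivity)
  have hB₀ : B₀ ^ 2 = w₀ ^ 2 + s := Real.sq_sqrt (by positivity)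
  have hB₁ : B₁ ^ 2 = w₁ ^ 2 + s := Real.sq_sqrt (by positivity)
  have hA₀n : 0 ≤ A₀ := Real.sqrt_nonneg _
  have hA₁n : 0 ≤ A₁ := Real.sqrt_nonneg _
  have hB₀n : 0 ≤ B₀ := Real.sqrt_nonneg _
  have hB₁n : 0 ≤ B₁ := Real.sqrt_nonneg _
  have hA01 : A₀ ≤ A₁ := Real.sqrt_le_sqrt (by nlinarith)
  have hB01 : B₀ ≤ B₁ := Real.sqrt_le_sqrt (by nlinarith)
  have hAB0 : A₀ ≤ B₀ := Real.sqrt_le_sqrt (by linarith)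
  have hAB1 : A₁ ≤ B₁ := Real.sqrt_le_sqrt (by linarith)
  have hB₀pos : 0 < B₀ := Real.sqrt_pos.mpr (by positivity)
  have claim1 : A₀ * B₁ < A₁ * B₀ := by
    have h1 : A₀ * B₁ = Real.sqrt ((w₀ ^ 2 + t) * (w₁ ^ 2 + s)) :=
      (Real.sqrt_mul (by positivity) _).symm
    have h2 : A₁ * B₀ = Real.sqrt ((w₁ ^ 2 + t) * (w₀ ^ 2 + s)) :=
      (Real.sqrt_mul (by positivity) _).symm
    rw [h1, h2]
    have hkey : (0:ℝ) < (s - t) * (w₁ ^ 2 - w₀ ^ 2) :=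
      mul_pos (by linarith) (by nlinarith)
    exact Real.sqrt_lt_sqrt (by positivity) (by nlinarith)
  have claim2 : A₀ * w₁ + B₁ * w₀ ≤ A₁ * w₀ + B₀ * w₁ := by
    have hd0 : (B₀ - A₀) * (B₀ + A₀) = s - t := by linear_combination hB₀ - hA₀
    have hd1 : (B₁ - A₁) * (B₁ + A₁) = s - t := by linear_combination hB₁ - hA₁
    have hBA1 : 0 ≤ B₁ - A₁ := by linarith
    have hge : B₁ - A₁ ≤ B₀ - A₀ := by
      nlinarith [mul_nonneg hBA1 (by linarith : (0:ℝ) ≤ B₁ + A₁ - (B₀ + A₀))]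
    have h1 : w₀ * (B₁ - A₁) ≤ w₀ * (B₀ - A₀) := mul_le_mul_of_nonneg_left hge hw0
    have h2 : w₀ * (B₀ - A₀) ≤ w₁ * (B₀ - A₀) :=
      mul_le_mul_of_nonneg_right hw.le (by linarith)
    linarith
  have main : (A₀ + w₀) * (B₁ + w₁) < (A₁ + w₁) * (B₀ + w₀) := by
    have e1 : (A₀ + w₀) * (B₁ + w₁) = A₀ * B₁ + A₀ * w₁ + B₁ * w₀ + w₀ * w₁ := by ring
    have e2 : (A₁ + w₁) * (B₀ + w₀) = A₁ * B₀ + A₁ * w₀ + B₀ * w₁ + w₀ * w₁ := by ring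
    rw [e1, e2]
    linarith
  rw [psi_eq_div t w₁ ht, psi_eq_div t w₀ ht, psi_eq_div s w₀ hs, psi_eq_div s w₁ hs,
    div_mul_div_comm, div_mul_div_comm]
  exact div_lt_div_of_pos_left (by positivity)
    (mul_pos (psi_denom_pos t w₀ ht) (psi_denom_pos s w₁ hs)) main

private lemma key_le (t s w₀ w₁ : ℝ) (ht : 0 ≤ t) (hts : t < s) (hw0 : 0 ≤ w₀)
    (hw : w₀ < w₁) : psi t w₁ * psi s w₀ ≤ psi t w₀ * psi s w₁ := by
  rcases ht.eq_or_lt with h | h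
  · rw [← h, psi_zero w₀ hw0, psi_zero w₁ (hw0.trans hw.le)]
    simp
  · exact (key t s w₀ w₁ h hts hw0 hw).le

private lemma no_lt (n : ℕ) (hn : 3 ≤ n) (x : ℕ → ℝ)
    (hx : ∀ k ∈ Finset.Icc 1 n, 0 < x k)
    (hmax : ∀ k ∈ Finset.Icc 1 n, x k ≤ x 1)
    (w₀ w₁ : ℝ) (hw0 : 0 ≤ w₀) (hlt : w₀ < w₁)
    (e₀ : ∑ k ∈ Finset.Icc 2 n, psi (x 1 - x k) w₀ = ((n : ℝ) - 2) * psi (x 1) w₀)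
    (e₁ : ∑ k ∈ Finset.Icc 2 n, psi (x 1 - x k) w₁ = ((n : ℝ) - 2) * psi (x 1) w₁) :
    False := by
  have h1n : (1 : ℕ) ∈ Finset.Icc 1 n := by simp [Finset.mem_Icc]; omega
  have hx1 : 0 < x 1 := hx 1 h1n
  have hmem : ∀ k ∈ Finset.Icc 2 n, k ∈ Finset.Icc 1 n := by
    intro k hk
    simp only [Finset.mem_Icc] at *
    omega
  have hn2 : (1 : ℝ) ≤ (n : ℝ) - 2 := by
    have : (3 : ℝ) ≤ (n : ℝ) := by exact_mod_cast hn
    linarith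
  by_cases hall : ∀ k ∈ Finset.Icc 2 n, x 1 - x k = 0
  · have hz : ∑ k ∈ Finset.Icc 2 n, psi (x 1 - x k) w₀ = 0 :=
      Finset.sum_eq_zero fun k hk => by rw [hall k hk]; exact psi_zero w₀ hw0
    have hp := psi_pos (x 1) w₀ hx1 hw0
    rw [hz] at e₀
    have := mul_pos (lt_of_lt_of_le one_pos hn2) hp
    linarith
  · push_neg at hall
    obtain ⟨k₀, hk₀, hne⟩ := hall
    have ht0 : 0 < x 1 - x k₀ :=
      lt_of_le_of_ne (by linarith [hmax k₀ (hmem k₀ hk₀)]) (Ne.symm hne)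
    have hts0 : x 1 - x k₀ < x 1 := by linarith [hx k₀ (hmem k₀ hk₀)]
    have hstrict : psi (x 1 - x k₀) w₁ * psi (x 1) w₀
        < psi (x 1 - x k₀) w₀ * psi (x 1) w₁ :=
      key _ _ _ _ ht0 hts0 hw0 hlt
    have hle : ∀ k ∈ Finset.Icc 2 n,
        psi (x 1 - x k) w₁ * psi (x 1) w₀ ≤ psi (x 1 - x k) w₀ * psi (x 1) w₁ := by
      intro k hk
      exact key_le _ _ _ _ (by linarith [hmax k (hmem k hk)])
        (by linarith [hx k (hmem k hk)]) hw0 hlt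
    have hsum := Finset.sum_lt_sum hle ⟨k₀, hk₀, hstrict⟩
    rw [← Finset.sum_mul, ← Finset.sum_mul, e₀, e₁] at hsum
    have heq : ((n : ℝ) - 2) * psi (x 1) w₁ * psi (x 1) w₀
        = ((n : ℝ) - 2) * psi (x 1) w₀ * psi (x 1) w₁ := by ring
    linarith

private lemma zero_eq (n : ℕ) (hn : 3 ≤ n) (x : ℕ → ℝ) (hx1 : 0 < x 1)
    (s : ℝ) (hs : Real.sqrt (x 1) ≤ s)
    (h : (∑ k ∈ Finset.Icc 2 n, Real.sqrt (s ^ 2 - x k))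
        - Real.sqrt (s ^ 2 - x 1) - ((n : ℝ) - 2) * s = 0) :
    ∑ k ∈ Finset.Icc 2 n, psi (x 1 - x k) (Real.sqrt (s ^ 2 - x 1))
      = ((n : ℝ) - 2) * psi (x 1) (Real.sqrt (s ^ 2 - x 1)) := by
  have hs0 : 0 ≤ s := (Real.sqrt_nonneg _).trans hs
  have hx1s : x 1 ≤ s ^ 2 := by
    have h1 : Real.sqrt (x 1) ^ 2 = x 1 := Real.sq_sqrt hx1.le
    nlinarith [Real.sqrt_nonneg (x 1)]
  set w := Real.sqrt (s ^ 2 - x 1) with hwdef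
  have hw2 : w ^ 2 = s ^ 2 - x 1 := Real.sq_sqrt (by linarith)
  have hterm : ∀ k, psi (x 1 - x k) w = Real.sqrt (s ^ 2 - x k) - w := by
    intro k
    unfold psi
    rw [show w ^ 2 + (x 1 - x k) = s ^ 2 - x k by rw [hw2]; ring]
  have hpsix1 : psi (x 1) w = s - w := by
    unfold psi
    rw [show w ^ 2 + x 1 = s ^ 2 by rw [hw2]; ring, Real.sqrt_sq hs0]
  have hcard : ((Finset.Icc 2 n).card : ℝ) = (n : ℝ) - 1 := by
    rw [Nat.card_Icc, Nat.cast_sub (by omega)]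
    push_cast
    ring
  have hsum : ∑ k ∈ Finset.Icc 2 n, Real.sqrt (s ^ 2 - x k)
      = w + ((n : ℝ) - 2) * s := by linarith
  calc ∑ k ∈ Finset.Icc 2 n, psi (x 1 - x k) w
      = ∑ k ∈ Finset.Icc 2 n, (Real.sqrt (s ^ 2 - x k) - w) :=
        Finset.sum_congr rfl fun k _ => hterm k
    _ = (∑ k ∈ Finset.Icc 2 n, Real.sqrt (s ^ 2 - x k))
        - ((Finset.Icc 2 n).card : ℝ) * w := by
        rw [Finset.sum_sub_distrib, Finset.sum_const, nsmul_eq_mul]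
    _ = ((n : ℝ) - 2) * psi (x 1) w := by
        rw [hsum, hcard, hpsix1]; ring

/-- For positive reals `x 1, …, x n` (`n ≥ 3`) with `x 1` the largest, the function
`g y = ∑_{k=2}^n √(y² - x k) - √(y² - x 1) - (n-2) y` has at most one zero on `[√(x 1), ∞)`. -/
theorem g_unique_zero (n : ℕ) (hn : 3 ≤ n) (x : ℕ → ℝ)
    (hx : ∀ k ∈ Finset.Icc 1 n, 0 < x k)
    (hmax : ∀ k ∈ Finset.Icc 1 n, x k ≤ x 1)
    (g : ℝ → ℝ)
    (hg : ∀ y, g y = (∑ k ∈ Finset.Icc 2 n, Real.sqrt (y ^ 2 - x k))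
        - Real.sqrt (y ^ 2 - x 1) - (n - 2 : ℝ) * y)
    (s₀ s₁ : ℝ) (h₀ : Real.sqrt (x 1) ≤ s₀) (h₁ : Real.sqrt (x 1) ≤ s₁)
    (hg₀ : g s₀ = 0) (hg₁ : g s₁ = 0) : s₀ = s₁ := by
  have h1n : (1 : ℕ) ∈ Finset.Icc 1 n := by simp [Finset.mem_Icc]; omega
  have hx1 : 0 < x 1 := hx 1 h1n
  have e₀ := zero_eq n hn x hx1 s₀ h₀ (by rw [← hg s₀]; exact hg₀)
  have e₁ := zero_eq n hn x hx1 s₁ h₁ (by rw [← hg s₁]; exact hg₁)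
  set w₀ := Real.sqrt (s₀ ^ 2 - x 1) with hw₀def
  set w₁ := Real.sqrt (s₁ ^ 2 - x 1) with hw₁def
  have hs₀0 : 0 ≤ s₀ := (Real.sqrt_nonneg _).trans h₀
  have hs₁0 : 0 ≤ s₁ := (Real.sqrt_nonneg _).trans h₁
  have hx1s₀ : x 1 ≤ s₀ ^ 2 := by
    have h1 : Real.sqrt (x 1) ^ 2 = x 1 := Real.sq_sqrt hx1.le
    nlinarith [Real.sqrt_nonneg (x 1)]
  have hx1s₁ : x 1 ≤ s₁ ^ 2 := by
    have h1 : Real.sqrt (x 1) ^ 2 = x 1 := Real.sq_sqrt hx1.le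
    nlinarith [Real.sqrt_nonneg (x 1)]
  have hw₀2 : w₀ ^ 2 = s₀ ^ 2 - x 1 := Real.sq_sqrt (by linarith)
  have hw₁2 : w₁ ^ 2 = s₁ ^ 2 - x 1 := Real.sq_sqrt (by linarith)
  rcases lt_trichotomy w₀ w₁ with h | h | h
  · exact (no_lt n hn x hx hmax w₀ w₁ (Real.sqrt_nonneg _) h e₀ e₁).elim
  · have hs₀ : s₀ = Real.sqrt (w₀ ^ 2 + x 1) := by
      rw [show w₀ ^ 2 + x 1 = s₀ ^ 2 by rw [hw₀2]; ring, Real.sqrt_sq hs₀0]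
    have hs₁ : s₁ = Real.sqrt (w₁ ^ 2 + x 1) := by
      rw [show w₁ ^ 2 + x 1 = s₁ ^ 2 by rw [hw₁2]; ring, Real.sqrt_sq hs₁0]
    rw [hs₀, hs₁, h]
  · exact (no_lt n hn x hx hmax w₁ w₀ (Real.sqrt_nonneg _) h e₁ e₀).elim
end

section
/- Let n ≥ 3 and let x_1,…,x_n be strictly positive real numbers with x_1 ≥ x_k for every k. Define f(y) = −2y + ∑_{k=1}^n x_k / (y + √(y² − x_k)) and g(y) = ∑_{k=2}^n √(y² − x_k) − √(y² − x_1) − (n−2)y. If r ≥ √(x_1) satisfies f(r) = 0 and s ≥ √(x_1) satisfies g(s) = 0, then r = s = √(x_1). -/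
set_option maxHeartbeats 1000000


lemma aux_growth {xk y z : ℝ} (hk : 0 < xk) (hky : xk ≤ y ^ 2) (hy0 : 0 ≤ y) (hyz : y ≤ z) :
    Real.sqrt (y ^ 2 - xk) + (z - y) ≤ Real.sqrt (z ^ 2 - xk) := by
  have hw0 := Real.sqrt_nonneg (y ^ 2 - xk)
  have hw2 : Real.sqrt (y ^ 2 - xk) ^ 2 = y ^ 2 - xk := Real.sq_sqrt (by linarith)
  set w := Real.sqrt (y ^ 2 - xk)
  have hwy : w ≤ y := by nlinarith
  rw [← Real.sqrt_sq (show (0:ℝ) ≤ w + (z - y) by linarith)]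
  exact Real.sqrt_le_sqrt (by nlinarith [mul_nonneg (sub_nonneg.2 hyz) (sub_nonneg.2 hwy)])

lemma aux_upper {x1 xk y a v : ℝ} (hk : 0 < xk) (hkx : xk ≤ x1)
    (ha : a = Real.sqrt x1) (hv : v = Real.sqrt (y ^ 2 - x1)) (hy : a ≤ y) :
    Real.sqrt (y ^ 2 - xk) ≤ v + Real.sqrt (x1 - xk) * ((y - v) / a) := by
  have hx1 : 0 < x1 := lt_of_lt_of_le hk hkx
  have ha0 : 0 < a := ha ▸ Real.sqrt_pos.2 hx1
  have ha2 : a ^ 2 = x1 := ha ▸ Real.sq_sqrt hx1.le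
  have hy2 : x1 ≤ y ^ 2 := by nlinarith
  have hv0 : 0 ≤ v := hv ▸ Real.sqrt_nonneg _
  have hv2 : v ^ 2 = y ^ 2 - x1 := hv ▸ Real.sq_sqrt (by linarith)
  have hvy : v ≤ y := by nlinarith
  have hs0 : 0 ≤ Real.sqrt (x1 - xk) := Real.sqrt_nonneg _
  have hs2 : Real.sqrt (x1 - xk) ^ 2 = x1 - xk := Real.sq_sqrt (by linarith)
  set sk := Real.sqrt (x1 - xk)
  have hsa : sk ≤ a := by nlinarith
  set t := (y - v) / a with htdef
  have hta : a * t = y - v := by rw [htdef]; field_simp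
  have ht0 : 0 ≤ t := div_nonneg (by linarith) ha0.le
  have hyva : y - v ≤ a := by nlinarith [mul_pos ha0 (show (0:ℝ) < y + v by nlinarith)]
  have ht1 : t ≤ 1 := by rw [htdef]; exact div_le_one_of_le₀ hyva ha0.le
  have h1mt : 0 ≤ 1 - t ^ 2 := by nlinarith
  have h2 : a ^ 2 - (a * t) ^ 2 = 2 * v * (a * t) := by rw [hta]; linear_combination ha2 + hv2
  have hE : a * (1 - t ^ 2) = 2 * v * t :=
    mul_left_cancel₀ ha0.ne' (by linear_combination h2)
  have key : sk ^ 2 * (1 - t ^ 2) ≤ 2 * v * sk * t := by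
    have h3 : sk ^ 2 * (1 - t ^ 2) ≤ sk * (a * (1 - t ^ 2)) := by
      nlinarith [mul_nonneg (mul_nonneg (sub_nonneg.2 hsa) hs0) h1mt]
    rw [hE] at h3; nlinarith
  have hR : 0 ≤ v + sk * t := by positivity
  rw [← Real.sqrt_sq hR]
  apply Real.sqrt_le_sqrt
  nlinarith [key]

lemma aux_upper_strict {x1 xk y a v : ℝ} (hk : 0 < xk) (hkx : xk < x1)
    (ha : a = Real.sqrt x1) (hv : v = Real.sqrt (y ^ 2 - x1)) (hy : a < y) :
    Real.sqrt (y ^ 2 - xk) < v + Real.sqrt (x1 - xk) * ((y - v) / a) := by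
  have hx1 : 0 < x1 := lt_trans hk hkx
  have ha0 : 0 < a := ha ▸ Real.sqrt_pos.2 hx1
  have ha2 : a ^ 2 = x1 := ha ▸ Real.sq_sqrt hx1.le
  have hy2 : x1 < y ^ 2 := by nlinarith
  have hv0 : 0 < v := hv ▸ Real.sqrt_pos.2 (by linarith)
  have hv2 : v ^ 2 = y ^ 2 - x1 := hv ▸ Real.sq_sqrt (by linarith)
  have hvy : v < y := by nlinarith
  have hs0 : 0 < Real.sqrt (x1 - xk) := Real.sqrt_pos.2 (by linarith)
  have hs2 : Real.sqrt (x1 - xk) ^ 2 = x1 - xk := Real.sq_sqrt (by linarith)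
  set sk := Real.sqrt (x1 - xk)
  have hsa : sk < a := by nlinarith
  set t := (y - v) / a with htdef
  have hta : a * t = y - v := by rw [htdef]; field_simp
  have ht0 : 0 < t := div_pos (by linarith) ha0
  have hyva : y - v < a := by nlinarith [mul_pos ha0 (show (0:ℝ) < y + v by nlinarith)]
  have ht1 : t < 1 := by rw [htdef]; exact (div_lt_one ha0).2 hyva
  have h1mt : 0 < 1 - t ^ 2 := by nlinarith
  have h2 : a ^ 2 - (a * t) ^ 2 = 2 * v * (a * t) := by rw [hta]; linear_combination ha2 + hv2
  have hE : a * (1 - t ^ 2) = 2 * v * t :=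
    mul_left_cancel₀ ha0.ne' (by linear_combination h2)
  have key : sk ^ 2 * (1 - t ^ 2) < 2 * v * sk * t := by
    have h3 : sk ^ 2 * (1 - t ^ 2) < sk * (a * (1 - t ^ 2)) := by
      nlinarith [mul_pos (mul_pos (sub_pos.2 hsa) hs0) h1mt]
    rw [hE] at h3; nlinarith
  have hR : 0 ≤ v + sk * t := by positivity
  rw [← Real.sqrt_sq hR]
  exact Real.sqrt_lt_sqrt (by nlinarith) (by nlinarith [key])


/-- Conclusion of Case 1 in the proof of Lemma 2: for positive reals `x 1, …, x n` (`n ≥ 3`)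
with `x 1` the largest, if `r ≥ √(x 1)` is a zero of
`f y = -2 y + ∑_{k=1}^n x k / (y + √(y² - x k))` and `s ≥ √(x 1)` is a zero of
`g y = ∑_{k=2}^n √(y² - x k) - √(y² - x 1) - (n-2) y`, then `r = s = √(x 1)`. -/
theorem f_and_g_zeros_at_sqrt_x1 (n : ℕ) (hn : 3 ≤ n) (x : ℕ → ℝ)
    (hx : ∀ k ∈ Finset.Icc 1 n, 0 < x k)
    (hmax : ∀ k ∈ Finset.Icc 1 n, x k ≤ x 1)
    (f g : ℝ → ℝ)
    (hf : ∀ y, f y = -2 * y + ∑ k ∈ Finset.Icc 1 n, x k / (y + Real.sqrt (y ^ 2 - x k)))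
    (hg : ∀ y, g y = (∑ k ∈ Finset.Icc 2 n, Real.sqrt (y ^ 2 - x k))
        - Real.sqrt (y ^ 2 - x 1) - (n - 2 : ℝ) * y)
    (r s : ℝ) (hr : Real.sqrt (x 1) ≤ r) (hs : Real.sqrt (x 1) ≤ s)
    (hfr : f r = 0) (hgs : g s = 0) :
    r = Real.sqrt (x 1) ∧ s = Real.sqrt (x 1) := by
  have hn3 : (3:ℝ) ≤ (n:ℝ) := by exact_mod_cast hn
  have h1mem : (1:ℕ) ∈ Finset.Icc 1 n := by simp [Finset.mem_Icc]; omega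
  have hx1 : 0 < x 1 := hx 1 h1mem
  set a : ℝ := Real.sqrt (x 1) with hadef
  have ha0 : 0 < a := Real.sqrt_pos.2 hx1
  have ha2 : a ^ 2 = x 1 := Real.sq_sqrt hx1.le
  have hsub : ∀ k ∈ Finset.Icc 2 n, k ∈ Finset.Icc 1 n := by
    intro k hk; simp only [Finset.mem_Icc] at *; omega
  have hins : Finset.Icc 1 n = insert 1 (Finset.Icc 2 n) := by
    ext m; simp only [Finset.mem_Icc, Finset.mem_insert]; omega
  have h1not : (1:ℕ) ∉ Finset.Icc 2 n := by simp [Finset.mem_Icc]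
  have hcard1 : (Finset.Icc 1 n).card = n := by rw [Nat.card_Icc]; omega
  have hcard2 : (Finset.Icc 2 n).card = n - 1 := by rw [Nat.card_Icc]; omega
  have hcard2' : ((Finset.Icc 2 n).card : ℝ) = (n:ℝ) - 1 := by
    rw [hcard2]; have : 1 ≤ n := by omega
    push_cast [Nat.cast_sub this]; ring
  -- rewrite f
  have hfF : ∀ y, a ≤ y →
      f y = ((n:ℝ) - 2) * y - ∑ k ∈ Finset.Icc 1 n, Real.sqrt (y ^ 2 - x k) := by
    intro y hy
    have hy0 : 0 < y := lt_of_lt_of_le ha0 hy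
    rw [hf y]
    have hterm : ∀ k ∈ Finset.Icc 1 n,
        x k / (y + Real.sqrt (y ^ 2 - x k)) = y - Real.sqrt (y ^ 2 - x k) := by
      intro k hk
      have hxk : 0 < x k := hx k hk
      have hky : x k ≤ y ^ 2 := by nlinarith [hmax k hk]
      have hw0 := Real.sqrt_nonneg (y ^ 2 - x k)
      have hw2 : Real.sqrt (y ^ 2 - x k) ^ 2 = y ^ 2 - x k := Real.sq_sqrt (by linarith)
      rw [div_eq_iff (by positivity)]
      linear_combination hw2
    rw [Finset.sum_congr rfl hterm, Finset.sum_sub_distrib, Finset.sum_const, hcard1,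
      nsmul_eq_mul]
    ring
  have hFr : ∑ k ∈ Finset.Icc 1 n, Real.sqrt (r ^ 2 - x k) = ((n:ℝ) - 2) * r := by
    have := hfF r hr; rw [hfr] at this; linarith
  -- growth inequality from a to r
  have hgrow : ∑ k ∈ Finset.Icc 1 n, (Real.sqrt (a ^ 2 - x k) + (r - a))
      ≤ ∑ k ∈ Finset.Icc 1 n, Real.sqrt (r ^ 2 - x k) := by
    apply Finset.sum_le_sum
    intro k hk
    exact aux_growth (hx k hk) (by nlinarith [hmax k hk]) ha0.le hr
  have hgrow' : (∑ k ∈ Finset.Icc 1 n, Real.sqrt (a ^ 2 - x k)) + (n:ℝ) * (r - a)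
      ≤ ((n:ℝ) - 2) * r := by
    rw [Finset.sum_add_distrib, Finset.sum_const, hcard1, nsmul_eq_mul] at hgrow
    linarith [hFr ▸ hgrow]
  -- split the k = 1 term (which is 0 at y = a)
  have hzero1 : Real.sqrt (a ^ 2 - x 1) = 0 := by rw [ha2]; simp
  have hsplit : ∑ k ∈ Finset.Icc 1 n, Real.sqrt (a ^ 2 - x k)
      = ∑ k ∈ Finset.Icc 2 n, Real.sqrt (a ^ 2 - x k) := by
    rw [hins, Finset.sum_insert h1not, hzero1, zero_add]
  have hU : ∑ k ∈ Finset.Icc 2 n, Real.sqrt (x 1 - x k) ≤ ((n:ℝ) - 2) * a := by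
    have h := hgrow'
    rw [hsplit] at h
    have heq : ∀ k ∈ Finset.Icc 2 n, Real.sqrt (a ^ 2 - x k) = Real.sqrt (x 1 - x k) := by
      intro k hk; rw [ha2]
    rw [Finset.sum_congr rfl heq] at h
    nlinarith [hr, ha0]
  -- g is negative to the right of a
  have hgneg : ∀ y, a < y → g y < 0 := by
    intro y hy
    have hy0 : 0 < y := lt_trans ha0 hy
    set v : ℝ := Real.sqrt (y ^ 2 - x 1) with hvdef
    have hv0 : 0 ≤ v := Real.sqrt_nonneg _
    have hv2 : v ^ 2 = y ^ 2 - x 1 := Real.sq_sqrt (by nlinarith)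
    have hvy : v < y := by nlinarith
    rw [hg y]
    by_cases hex : ∃ k ∈ Finset.Icc 2 n, x k < x 1
    · obtain ⟨k₀, hk₀, hk₀x⟩ := hex
      have hsum : ∑ k ∈ Finset.Icc 2 n, Real.sqrt (y ^ 2 - x k)
          < ∑ k ∈ Finset.Icc 2 n, (v + Real.sqrt (x 1 - x k) * ((y - v) / a)) := by
        apply Finset.sum_lt_sum
        · intro k hk
          exact aux_upper (hx k (hsub k hk)) (hmax k (hsub k hk)) hadef hvdef hy.le
        · exact ⟨k₀, hk₀, aux_upper_strict (hx k₀ (hsub k₀ hk₀)) hk₀x hadef hvdef hy⟩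
      have hsum2 : ∑ k ∈ Finset.Icc 2 n, (v + Real.sqrt (x 1 - x k) * ((y - v) / a))
          = ((n:ℝ) - 1) * v
            + (∑ k ∈ Finset.Icc 2 n, Real.sqrt (x 1 - x k)) * ((y - v) / a) := by
        rw [Finset.sum_add_distrib, Finset.sum_const, nsmul_eq_mul, hcard2',
          ← Finset.sum_mul]
      have htnn : 0 ≤ (y - v) / a := div_nonneg (by linarith) ha0.le
      have hle : (∑ k ∈ Finset.Icc 2 n, Real.sqrt (x 1 - x k)) * ((y - v) / a)
          ≤ ((n:ℝ) - 2) * (y - v) := by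
        calc (∑ k ∈ Finset.Icc 2 n, Real.sqrt (x 1 - x k)) * ((y - v) / a)
            ≤ (((n:ℝ) - 2) * a) * ((y - v) / a) := by
              exact mul_le_mul_of_nonneg_right hU htnn
          _ = ((n:ℝ) - 2) * (y - v) := by field_simp
      rw [hsum2] at hsum
      linarith
    · push_neg at hex
      have hall : ∀ k ∈ Finset.Icc 2 n, Real.sqrt (y ^ 2 - x k) = v := by
        intro k hk
        rw [le_antisymm (hmax k (hsub k hk)) (hex k hk)]
      rw [Finset.sum_congr rfl hall, Finset.sum_const, nsmul_eq_mul, hcard2']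
      nlinarith
  -- conclude s = a
  have hsa : s = a := by
    rcases eq_or_lt_of_le hs with h | h
    · exact h.symm
    · exact absurd hgs (ne_of_lt (hgneg s h))
  -- hence g a = 0, so the sum at a equals (n-2) a
  have hga : ∑ k ∈ Finset.Icc 2 n, Real.sqrt (a ^ 2 - x k) = ((n:ℝ) - 2) * a := by
    have := hgs
    rw [hsa, hg a, hzero1] at this
    linarith
  -- conclude r = a
  have hra : r = a := by
    have h := hgrow'
    rw [hsplit, hga] at h
    have : r ≤ a := by linarith
    linarith [le_antisymm this hr]
  exact ⟨hra, hsa⟩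
end

section
/- Let n ≥ 3 and let a_1,…,a_n and b_1,…,b_n be strictly positive real numbers with ∑_{j=1}^n a_j ≤ 1 and ∑_{j=1}^n b_j ≤ 1. Set u = 1 − ∑_{j=1}^n a_j and v = 1 − ∑_{j=1}^n b_j, and for each k define the 2×2 real matrices ρ_k = [[1 − a_k, √(u·a_k)], [√(u·a_k), a_k]] and σ_k = [[1 − b_k, √(v·b_k)], [√(v·b_k), b_k]]. If for every k the characteristic polynomial of ρ_k equals the characteristic polynomial of σ_k (equivalently, ρ_k and σ_k have the same spectrum), then a_k = b_k for every k and u = v. -/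
/-! Auxiliary lemmas for the W-state uniqueness theorem. -/

section Aux

lemma w_exists_third {n : ℕ} (hn : 3 ≤ n) (j k : Fin n) : ∃ m, m ≠ j ∧ m ≠ k := by
  have h1 : 1 < (Finset.univ.erase j).card := by
    rw [Finset.card_erase_of_mem (Finset.mem_univ j), Finset.card_univ, Fintype.card_fin]
    omega
  obtain ⟨m, hm, hmk⟩ := Finset.exists_mem_ne h1 k
  exact ⟨m, Finset.ne_of_mem_erase hm, hmk⟩

lemma w_pair_lt_sum {n : ℕ} (hn : 3 ≤ n) (a : Fin n → ℝ) (ha : ∀ k, 0 < a k)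
    {j k : Fin n} (hjk : j ≠ k) : a j + a k < ∑ i, a i := by
  obtain ⟨m, hmj, hmk⟩ := w_exists_third hn j k
  have hsub : ({j, k, m} : Finset (Fin n)).sum a ≤ Finset.univ.sum a :=
    Finset.sum_le_sum_of_subset_of_nonneg (Finset.subset_univ _) (fun i _ _ => (ha i).le)
  rw [show ({j, k, m} : Finset (Fin n)) = insert j (insert k {m}) from rfl,
    Finset.sum_insert (by simp [hjk, hmj.symm]),
    Finset.sum_insert (by simp [hmk.symm]), Finset.sum_singleton] at hsub
  have := ha m
  linarith

lemma w_lt_sum {n : ℕ} (hn : 3 ≤ n) (a : Fin n → ℝ) (ha : ∀ k, 0 < a k)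
    (k : Fin n) : a k < ∑ i, a i := by
  obtain ⟨m, hmk, _⟩ := w_exists_third hn k k
  have := w_pair_lt_sum hn a ha hmk
  have := ha m
  linarith

/-- Comparison of normalized small roots: if `α(S-α) = β(T-β)` with both on the
"small" side and `T < S`, then `α/S < β/T`, i.e. `αT < βS`. -/
lemma w_cross_lt {S T α β : ℝ} (hT : 0 < T) (hTS : T < S) (hα : 0 < α) (hβ : 0 < β)
    (h2α : 2 * α ≤ S) (h2β : 2 * β ≤ T) (heq : α * (S - α) = β * (T - β)) :
    α * T < β * S := by
  have hd0 : 0 < α * (S - α) := mul_pos hα (by linarith)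
  have key : (β * S - α * T) * (S * T - α * T - β * S) = (S ^ 2 - T ^ 2) * (α * (S - α)) := by
    linear_combination (-(S ^ 2) : ℝ) * heq
  have hxy : α * T + β * S ≤ S * T := by nlinarith
  have hpos : 0 < (S ^ 2 - T ^ 2) * (α * (S - α)) := by
    apply mul_pos _ hd0
    nlinarith
  by_contra hc
  push_neg at hc
  nlinarith [mul_nonneg (by linarith : (0:ℝ) ≤ α * T - β * S)
    (by linarith : (0:ℝ) ≤ S * T - α * T - β * S)]

/-- Monotonicity of `x ↦ x (T - x)` on the small side. -/
lemma w_small_mono {T x y : ℝ} (hx : 0 < x) (hy : 0 < y) (h2x : 2 * x ≤ T) (h2y : 2 * y ≤ T)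
    (h : x * (T - x) < y * (T - y)) : x < y := by
  by_contra hc
  push_neg at hc
  nlinarith [mul_nonneg (sub_nonneg.2 hc) (by linarith : (0:ℝ) ≤ T - x - y)]

/-- Ratio comparison ("strict concavity" of the small root map): if two pairs of
small roots satisfy the matching equations with `T < S` and `β₁ < β₂`, then
`α₂ β₁ < α₁ β₂`. -/
lemma w_ratio_lt {S T α₁ β₁ α₂ β₂ : ℝ} (hT : 0 < T) (hTS : T < S)
    (hα₁ : 0 < α₁) (hβ₁ : 0 < β₁) (hα₂ : 0 < α₂) (hβ₂ : 0 < β₂)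
    (h2α₁ : 2 * α₁ ≤ S) (h2β₁ : 2 * β₁ ≤ T) (h2α₂ : 2 * α₂ ≤ S) (h2β₂ : 2 * β₂ ≤ T)
    (heq₁ : α₁ * (S - α₁) = β₁ * (T - β₁)) (heq₂ : α₂ * (S - α₂) = β₂ * (T - β₂))
    (hβ : β₁ < β₂) : α₂ * β₁ < α₁ * β₂ := by
  have hA1 := w_cross_lt hT hTS hα₁ hβ₁ h2α₁ h2β₁ heq₁
  have hA2 := w_cross_lt hT hTS hα₂ hβ₂ h2α₂ h2β₂ heq₂
  have hsT : 0 < T - β₁ - β₂ := by linarith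
  have hdlt : α₁ * (S - α₁) < α₂ * (S - α₂) := by
    rw [heq₁, heq₂]
    nlinarith [mul_pos (sub_pos.2 hβ) hsT]
  have hα : α₁ < α₂ := w_small_mono hα₁ hα₂ h2α₁ h2α₂ hdlt
  have hsS : 0 < S - α₁ - α₂ := by linarith
  have step1 : α₂ * (T - β₁) < β₂ * (S - α₁) := by
    have h1 : α₂ * T * (S - α₁) < β₂ * S * (S - α₁) :=
      mul_lt_mul_of_pos_right hA2 (by linarith)
    have h2 : α₂ * (α₁ * T) < α₂ * (β₁ * S) := mul_lt_mul_of_pos_left hA1 hα₂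
    have h3 : S * (α₂ * (T - β₁)) < S * (β₂ * (S - α₁)) := by nlinarith
    exact lt_of_mul_lt_mul_left h3 (by linarith : (0:ℝ) ≤ S)
  have step3 : β₁ * (T - β₁ - β₂) < α₁ * (S - α₁ - α₂) := by
    have h5 : (S - α₁) * (T - β₁ - β₂) < (S - α₁ - α₂) * (T - β₁) := by nlinarith
    have h6 : α₁ * ((S - α₁) * (T - β₁ - β₂)) < α₁ * ((S - α₁ - α₂) * (T - β₁)) :=
      mul_lt_mul_of_pos_left h5 hα₁
    have h7 : α₁ * ((S - α₁) * (T - β₁ - β₂)) = (β₁ * (T - β₁ - β₂)) * (T - β₁) := by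
      linear_combination (T - β₁ - β₂) * heq₁
    have h8 : (β₁ * (T - β₁ - β₂)) * (T - β₁) < (α₁ * (S - α₁ - α₂)) * (T - β₁) := by
      nlinarith
    exact lt_of_mul_lt_mul_right h8 (by linarith : (0:ℝ) ≤ T - β₁)
  have hΔ : (α₂ - α₁) * (S - α₁ - α₂) = (β₂ - β₁) * (T - β₁ - β₂) := by
    linear_combination heq₂ - heq₁
  have h9 : (α₁ * β₂ - α₂ * β₁) * (S - α₁ - α₂)
      = (β₂ - β₁) * (α₁ * (S - α₁ - α₂) - β₁ * (T - β₁ - β₂)) := by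
    linear_combination (-β₁ : ℝ) * hΔ
  have h10 : 0 < (β₂ - β₁) * (α₁ * (S - α₁ - α₂) - β₁ * (T - β₁ - β₂)) :=
    mul_pos (by linarith) (by linarith)
  by_contra hc
  push_neg at hc
  nlinarith [mul_nonneg (by linarith : (0:ℝ) ≤ α₂ * β₁ - α₁ * β₂) hsS.le]

/-- Core uniqueness argument: two positive W-type parameter vectors with the same
single-particle determinants cannot have different total weights. -/
lemma w_core {n : ℕ} (hn : 3 ≤ n) (a b : Fin n → ℝ) (ha : ∀ k, 0 < a k) (hb : ∀ k, 0 < b k)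
    {S T : ℝ} (hS : S = ∑ j, a j) (hT : T = ∑ j, b j)
    (hd : ∀ k, a k * (S - a k) = b k * (T - b k)) (hTS : T < S) : False := by
  haveI : Nonempty (Fin n) := ⟨⟨0, by omega⟩⟩
  have hT0 : 0 < T := by
    rw [hT]; exact Finset.sum_pos (fun i _ => hb i) Finset.univ_nonempty
  have hS0 : 0 < S := lt_trans hT0 hTS
  have hpaira : ∀ {j k : Fin n}, j ≠ k → a j + a k < S := by
    intro j k hjk; rw [hS]; exact w_pair_lt_sum hn a ha hjk
  have hpairb : ∀ {j k : Fin n}, j ≠ k → b j + b k < T := by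
    intro j k hjk; rw [hT]; exact w_pair_lt_sum hn b hb hjk
  have haS : ∀ k, a k < S := by intro k; rw [hS]; exact w_lt_sum hn a ha k
  have hbT : ∀ k, b k < T := by intro k; rw [hT]; exact w_lt_sum hn b hb k
  by_cases hbig : ∃ j, S < 2 * a j
  · obtain ⟨j, hj⟩ := hbig
    have hsm : ∀ k, k ≠ j → 2 * a k ≤ S := by
      intro k hk
      by_contra h
      push_neg at h
      have := hpaira (Ne.symm hk)
      linarith
    have hdmax : ∀ k, k ≠ j → a k * (S - a k) < a j * (S - a j) := by
      intro k hk
      have h1 := hsm k hk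
      have h2 := hpaira (Ne.symm hk)
      nlinarith [mul_pos (show (0:ℝ) < a j - a k by linarith)
        (show (0:ℝ) < S - a j - a k by linarith)]
    set β := if 2 * b j ≤ T then b j else T - b j with hβdef
    have hβpos : 0 < β := by
      rw [hβdef]; split_ifs with h
      · exact hb j
      · linarith [hbT j]
    have hβle2 : 2 * β ≤ T := by
      rw [hβdef]; split_ifs with h
      · exact h
      · push_neg at h; linarith
    have hβd : β * (T - β) = b j * (T - b j) := by
      rw [hβdef]; split_ifs with h
      · rfl
      · ring
    have hkj2 : ∀ k, k ≠ j → 2 * b k ≤ T := by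
      intro k hk
      by_contra h
      push_neg at h
      have hbj2 : 2 * b j ≤ T := by
        by_contra h2
        push_neg at h2
        have := hpairb (Ne.symm hk)
        linarith
      have hβeq : β = b j := by rw [hβdef, if_pos hbj2]
      have hβ'pos : 0 < T - b k := by linarith [hbT k]
      have hβ'le : 2 * (T - b k) ≤ T := by linarith
      have hlt2 : (T - b k) * (T - (T - b k)) < β * (T - β) := by
        have e1 : (T - b k) * (T - (T - b k)) = b k * (T - b k) := by ring
        rw [e1, hβd, ← hd k, ← hd j]
        exact hdmax k hk
      have hml := w_small_mono hβ'pos hβpos hβ'le hβle2 hlt2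
      have := hpairb (Ne.symm hk)
      rw [hβeq] at hml
      linarith
    have hα'pos : 0 < S - a j := by linarith [haS j]
    have hα'le : 2 * (S - a j) ≤ S := by linarith
    have heq₂ : (S - a j) * (S - (S - a j)) = β * (T - β) := by
      rw [hβd]
      have : (S - a j) * (S - (S - a j)) = a j * (S - a j) := by ring
      rw [this]
      exact hd j
    have hbkβ : ∀ k, k ≠ j → b k < β := by
      intro k hk
      apply w_small_mono (hb k) hβpos (hkj2 k hk) hβle2
      rw [hβd, ← hd k, ← hd j]
      exact hdmax k hk
    have hC : ∀ k, k ≠ j → (S - a j) * b k < a k * β := by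
      intro k hk
      exact w_ratio_lt hT0 hTS (ha k) (hb k) hα'pos hβpos (hsm k hk) (hkj2 k hk)
        hα'le hβle2 (hd k) heq₂ (hbkβ k hk)
    have hne : (Finset.univ.erase j).Nonempty := by
      rw [← Finset.card_pos, Finset.card_erase_of_mem (Finset.mem_univ j),
        Finset.card_univ, Fintype.card_fin]
      omega
    have hsum := Finset.sum_lt_sum_of_nonempty hne
      (fun k hk => hC k (Finset.ne_of_mem_erase hk))
    have hsb : ∑ k ∈ Finset.univ.erase j, b k = T - b j := by
      have := Finset.sum_erase_add Finset.univ b (Finset.mem_univ j)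
      rw [← hT] at this
      linarith
    have hsa : ∑ k ∈ Finset.univ.erase j, a k = S - a j := by
      have := Finset.sum_erase_add Finset.univ a (Finset.mem_univ j)
      rw [← hS] at this
      linarith
    rw [← Finset.mul_sum, ← Finset.sum_mul, hsb, hsa] at hsum
    have hβle' : β ≤ T - b j := by
      rw [hβdef]; split_ifs with h
      · linarith
      · linarith
    nlinarith [mul_le_mul_of_nonneg_left hβle' hα'pos.le]
  · push_neg at hbig
    have h1 : ∀ k, a k * T < b k * S := by
      intro k
      by_cases h2 : 2 * b k ≤ T
      · exact w_cross_lt hT0 hTS (ha k) (hb k) (hbig k) h2 (hd k)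
      · push_neg at h2
        have h3 : 0 < T - b k := by linarith [hbT k]
        have h4 : a k * (S - a k) = (T - b k) * (T - (T - b k)) := by
          rw [hd k]; ring
        have h5 := w_cross_lt hT0 hTS (ha k) h3 (hbig k) (by linarith) h4
        have h6 : (T - b k) * S < b k * S := by
          apply mul_lt_mul_of_pos_right _ hS0
          linarith
        linarith
    have hsum := Finset.sum_lt_sum_of_nonempty Finset.univ_nonempty (fun k _ => h1 k)
    rw [← Finset.sum_mul, ← Finset.sum_mul, ← hS, ← hT] at hsum
    nlinarith

end Aux

/-- Theorem 1 of the paper (canonical-form version): a W-type state is determined by the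
spectra (characteristic polynomials) of its single-particle reduced density matrices. -/
theorem w_state_determined_by_single_particle_rdms (n : ℕ) (hn : 3 ≤ n)
    (a b : Fin n → ℝ) (ha : ∀ k, 0 < a k) (hb : ∀ k, 0 < b k)
    (hsa : ∑ j, a j ≤ 1) (hsb : ∑ j, b j ≤ 1)
    (u v : ℝ) (hu : u = 1 - ∑ j, a j) (hv : v = 1 - ∑ j, b j)
    (ρ σ : Fin n → Matrix (Fin 2) (Fin 2) ℝ)
    (hρ : ∀ k, ρ k = !![1 - a k, Real.sqrt (u * a k); Real.sqrt (u * a k), a k])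
    (hσ : ∀ k, σ k = !![1 - b k, Real.sqrt (v * b k); Real.sqrt (v * b k), b k])
    (hchar : ∀ k, (ρ k).charpoly = (σ k).charpoly) :
    (∀ k, a k = b k) ∧ u = v := by
  have hu0 : 0 ≤ u := by rw [hu]; linarith
  have hv0 : 0 ≤ v := by rw [hv]; linarith
  have hdet : ∀ k, a k * ((∑ j, a j) - a k) = b k * ((∑ j, b j) - b k) := by
    intro k
    have h2 : (ρ k).det = (σ k).det := by
      rw [Matrix.det_eq_sign_charpoly_coeff, Matrix.det_eq_sign_charpoly_coeff, hchar k]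
    rw [hρ k, hσ k, Matrix.det_fin_two_of, Matrix.det_fin_two_of] at h2
    rw [Real.mul_self_sqrt (mul_nonneg hu0 (ha k).le),
      Real.mul_self_sqrt (mul_nonneg hv0 (hb k).le)] at h2
    rw [hu, hv] at h2
    linear_combination h2
  rcases lt_trichotomy (∑ j, a j) (∑ j, b j) with h | h | h
  · exact absurd (w_core hn b a hb ha rfl rfl (fun k => (hdet k).symm) h) (fun f => f)
  · have hab : ∀ k, a k = b k := by
      by_contra hc
      push_neg at hc
      obtain ⟨j, hj⟩ := hc
      have hzero : ∀ k, (a k - b k) * ((∑ j, a j) - a k - b k) = 0 := by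
        intro k
        have hk := hdet k
        rw [← h] at hk
        linear_combination hk
      have hsumj : a j + b j = ∑ i, a i := by
        rcases mul_eq_zero.1 (hzero j) with h1 | h1
        · exact absurd (by linarith : a j = b j) hj
        · linarith
      have haibi : ∀ i, i ≠ j → a i = b i := by
        intro i hi
        rcases mul_eq_zero.1 (hzero i) with h1 | h1
        · linarith
        · exfalso
          have p1 := w_pair_lt_sum hn a ha hi
          have p2 := w_pair_lt_sum hn b hb hi
          rw [← h] at p2
          linarith
      have hsa' : ∑ i ∈ Finset.univ.erase j, a i = ∑ i ∈ Finset.univ.erase j, b i :=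
        Finset.sum_congr rfl (fun i hi => haibi i (Finset.ne_of_mem_erase hi))
      have e1 := Finset.sum_erase_add Finset.univ a (Finset.mem_univ j)
      have e2 := Finset.sum_erase_add Finset.univ b (Finset.mem_univ j)
      rw [← h] at e2
      exact hj (by linarith)
    refine ⟨hab, ?_⟩
    rw [hu, hv, h]
  · exact absurd (w_core hn a b ha hb rfl rfl hdet h) (fun f => f)
end

section
/- Let n ≥ 3 and consider the n-qubit Hilbert space H = (ℂ²)^{⊗n} (the n-fold tensor product of ℂ² over ℂ). Let |W_n⟩ = (1/√n) ∑_{k=1}^n |e_k⟩, where |e_k⟩ denotes the standard basis vector of H having |1⟩ in the k-th tensor factor and |0⟩ in all other factors, and let |0⋯0⟩ denote the basis vector with |0⟩ in every factor. Suppose ψ ∈ H is a unit vector of the form ψ = (A_1 ⊗ A_2 ⊗ ⋯ ⊗ A_n)|W_n⟩ where each A_k is an invertible 2×2 complex matrix acting on the k-th factor. Then there exist 2×2 unitary matrices U_1,…,U_n and real numbers x ≥ 0 and c_1,…,c_n > 0 with x + ∑_{k=1}^n c_k = 1 such that (U_1 ⊗ U_2 ⊗ ⋯ ⊗ U_n)ψ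 = √x·|0⋯0⟩ + √(c_1)·|e_n⟩ + ⋯ + √(c_n)·|e_1⟩, i.e., (U_1 ⊗ ⋯ ⊗ U_n)ψ = √x·|0⋯0⟩ + ∑_{k=1}^n √(c_k)·|e_{σ(k)}⟩ for the order-reversing permutation σ; equivalently, ψ is mapped by a local unitary to a state of the form √x|0⋯0⟩ + ∑_k √(c_k)|e_k⟩ with x ≥ 0, c_k > 0 and x + ∑_k c_k = 1. -/
/-! Take a QR decomposition `A k = (V k)⁻¹ * R k` with `V k` unitary and `R k` upper triangular.
A local operator with upper-triangular factors maps `|0⋯0⟩` to a multiple of itself and `|e_k⟩`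
into the span of `|0⋯0⟩` and `|e_k⟩`, so `⊗ R k` maps `|W_n⟩` to `y |0⋯0⟩ + ∑ z_k |e_k⟩`, where
`z_k ≠ 0` because the `R k` are invertible. Diagonal local unitaries then turn `y` and every
`z_k` into their absolute values, and since local unitaries preserve the norm,
`|y|² + ∑ |z_k|² = 1`. -/

/-- The `n`-qubit Hilbert space is modelled concretely as functions `(Fin n → Fin 2) → ℂ`
(coordinates in the computational basis).  `kronMatrix A` is the matrix of the local
operator `A 0 ⊗ A 1 ⊗ ⋯ ⊗ A (n-1)` in this basis. -/
def kronMatrix (n : ℕ) (A : Fin n → Matrix (Fin 2) (Fin 2) ℂ) :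
    Matrix (Fin n → Fin 2) (Fin n → Fin 2) ℂ :=
  fun s t => ∏ k, A k (s k) (t k)

/-- The computational basis vector labelled by `t : Fin n → Fin 2`. -/
def basisVec (n : ℕ) (t : Fin n → Fin 2) : (Fin n → Fin 2) → ℂ :=
  fun s => if s = t then 1 else 0

/-- `eVec n k` is the basis vector with `|1⟩` in the `k`-th tensor factor and `|0⟩` elsewhere. -/
def eVec (n : ℕ) (k : Fin n) : (Fin n → Fin 2) → ℂ :=
  basisVec n (fun j => if j = k then 1 else 0)

/-- The `n`-qubit W state `|W_n⟩ = (1/√n) ∑_k |e_k⟩`. -/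
noncomputable def wState (n : ℕ) : (Fin n → Fin 2) → ℂ :=
  ((1 / Real.sqrt n : ℝ) : ℂ) • ∑ k, eVec n k

open Matrix

theorem Complex.exists_norm_eq_one_mul_eq_norm (w : ℂ) : ∃ p : ℂ, ‖p‖ = 1 ∧ p * w = ‖w‖ := by
  refine ⟨Complex.exp (↑(-w.arg) * Complex.I), Complex.norm_exp_ofReal_mul_I _, ?_⟩
  calc _ = Complex.exp (↑(-w.arg) * Complex.I) * (‖w‖ * Complex.exp (w.arg * Complex.I)) := by
        rw [Complex.norm_mul_exp_arg_mul_I]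
    _ = ‖w‖ := by
        rw [mul_left_comm, ← Complex.exp_add]
        simp

theorem sum_normSq_sum_single {α β : Type*} [Fintype α] [Fintype β] [DecidableEq β]
    {ι : α → β} (hι : ι.Injective) (w : α → ℂ) :
    ∑ b, Complex.normSq ((∑ a, Pi.single (ι a) (w a) : β → ℂ) b) = ∑ a, Complex.normSq (w a) := by
  have h_image (a : α) : (∑ a', Pi.single (ι a') (w a') : β → ℂ) (ι a) = w a := by
    rw [Finset.sum_apply, Finset.sum_eq_single a (fun a' _ h => by simp [hι.ne h]) (by simp)]
    simp
  have h_off (b : β) (hb : b ∉ Finset.univ.image ι) :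
      (∑ a, Pi.single (ι a) (w a) : β → ℂ) b = 0 := by
    simp only [Finset.mem_image, Finset.mem_univ, true_and, not_exists] at hb
    simp [Finset.sum_apply, fun a => Ne.symm (hb a)]
  rw [← Finset.sum_subset (Finset.subset_univ _) fun b _ hb => by simp [h_off b hb],
    Finset.sum_image (s := Finset.univ) fun a _ a' _ h => hι h]
  simp [h_image]

theorem sum_normSq_mulVec_of_mem_unitaryGroup {ι : Type*} [Fintype ι] [DecidableEq ι]
    {M : Matrix ι ι ℂ} (hM : M ∈ unitaryGroup ι ℂ) (v : ι → ℂ) :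
    ∑ s, Complex.normSq ((M *ᵥ v) s) = ∑ s, Complex.normSq (v s) := by
  have sum_normSq (w : ι → ℂ) : ((∑ s, Complex.normSq (w s) : ℝ) : ℂ) = star w ⬝ᵥ w := by
    simp [dotProduct, Complex.normSq_eq_conj_mul_self]
  have h : ((∑ s, Complex.normSq ((M *ᵥ v) s) : ℝ) : ℂ) =
      ((∑ s, Complex.normSq (v s) : ℝ) : ℂ) := by
    rw [sum_normSq, sum_normSq, star_mulVec, dotProduct_mulVec, vecMul_vecMul,
      ← star_eq_conjTranspose, (Unitary.mem_iff.mp hM).1, vecMul_one]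
  exact_mod_cast h

theorem diagonal_mem_unitaryGroup {ι : Type*} [Fintype ι] [DecidableEq ι] {d : ι → ℂ}
    (hd : ∀ i, ‖d i‖ = 1) : diagonal d ∈ unitaryGroup ι ℂ := by
  rw [mem_unitaryGroup_iff, star_eq_conjTranspose, diagonal_conjTranspose, diagonal_mul_diagonal,
    ← diagonal_one]
  congr 1
  ext i
  simp [Complex.mul_conj, Complex.normSq_eq_norm_sq, hd]

theorem exists_mem_unitaryGroup_mul_apply_one_zero (A : Matrix (Fin 2) (Fin 2) ℂ) :
    ∃ V ∈ unitaryGroup (Fin 2) ℂ, (V * A) 1 0 = 0 := by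
  by_cases hc : A 1 0 = 0
  · exact ⟨1, one_mem _, by simpa using hc⟩
  set a := A 0 0
  set c := A 1 0
  have hpos : 0 < Complex.normSq a + Complex.normSq c :=
    add_pos_of_nonneg_of_pos (Complex.normSq_nonneg a) (Complex.normSq_pos.mpr hc)
  set r : ℂ := ((Real.sqrt (Complex.normSq a + Complex.normSq c) : ℝ) : ℂ)
  have hr : r ≠ 0 := Complex.ofReal_ne_zero.mpr (Real.sqrt_pos.mpr hpos).ne'
  have hr_conj : starRingEnd ℂ r = r := Complex.conj_ofReal _
  have hr_sq : r * r = a * starRingEnd ℂ a + c * starRingEnd ℂ c := by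
    rw [← Complex.ofReal_mul, Real.mul_self_sqrt hpos.le, Complex.mul_conj, Complex.mul_conj,
      Complex.ofReal_add]
  refine ⟨r⁻¹ • !![star a, star c; -c, a], ?_, ?_⟩
  · rw [mem_unitaryGroup_iff]
    ext i j
    fin_cases i <;> fin_cases j <;> simp [mul_apply, Fin.sum_univ_two, one_apply, hr_conj] <;>
      field_simp <;> rw [sq, hr_sq] <;> ring
  · simp [mul_apply, Fin.sum_univ_two, a, c]
    ring

theorem ne_zero_and_ne_zero_of_isUnit_of_apply_one_zero {R : Type*} [CommRing R] [Nontrivial R]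
    {B : Matrix (Fin 2) (Fin 2) R} (hB : IsUnit B) (h : B 1 0 = 0) : B 0 0 ≠ 0 ∧ B 1 1 ≠ 0 := by
  have hdet : IsUnit (B 0 0 * B 1 1) := by
    simpa [det_fin_two, h] using (isUnit_iff_isUnit_det B).mp hB
  exact ⟨(isUnit_of_mul_isUnit_left hdet).ne_zero, (isUnit_of_mul_isUnit_right hdet).ne_zero⟩

theorem kronMatrix_mul (n : ℕ) (A B : Fin n → Matrix (Fin 2) (Fin 2) ℂ) :
    kronMatrix n (fun k => A k * B k) = kronMatrix n A * kronMatrix n B := by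
  ext s t
  simp only [kronMatrix, mul_apply, Finset.prod_univ_sum, Fintype.piFinset_univ,
    Finset.prod_mul_distrib]

theorem kronMatrix_one (n : ℕ) : kronMatrix n (fun _ => 1) = 1 := by
  ext s t
  by_cases h : s = t
  · subst h
    simp [kronMatrix, one_apply]
  · obtain ⟨k, hk⟩ := Function.ne_iff.mp h
    simp [kronMatrix, one_apply, h, Finset.prod_eq_zero (Finset.mem_univ k), hk]

theorem conjTranspose_kronMatrix (n : ℕ) (A : Fin n → Matrix (Fin 2) (Fin 2) ℂ) :
    (kronMatrix n A)ᴴ = kronMatrix n (fun k => (A k)ᴴ) := by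
  ext s t
  simp [kronMatrix, conjTranspose_apply]

theorem kronMatrix_mem_unitaryGroup {n : ℕ} {U : Fin n → Matrix (Fin 2) (Fin 2) ℂ}
    (hU : ∀ k, U k ∈ unitaryGroup (Fin 2) ℂ) :
    kronMatrix n U ∈ unitaryGroup (Fin n → Fin 2) ℂ := by
  rw [mem_unitaryGroup_iff, star_eq_conjTranspose, conjTranspose_kronMatrix, ← kronMatrix_mul]
  simp_rw [← star_eq_conjTranspose, fun k => mem_unitaryGroup_iff.mp (hU k), kronMatrix_one]

theorem basisVec_eq_single (n : ℕ) (t : Fin n → Fin 2) : basisVec n t = Pi.single t 1 := by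
  ext s
  simp [basisVec, Pi.single_apply]

theorem eVec_eq_basisVec_single (n : ℕ) (k : Fin n) : eVec n k = basisVec n (Pi.single k 1) := by
  rw [eVec]
  congr 1
  ext j
  simp [Pi.single_apply]

theorem kronMatrix_apply_single (n : ℕ) (B : Fin n → Matrix (Fin 2) (Fin 2) ℂ)
    (s : Fin n → Fin 2) (k : Fin n) :
    kronMatrix n B s (Pi.single k 1) = B k (s k) 1 * ∏ j ∈ Finset.univ.erase k, B j (s j) 0 := by
  rw [kronMatrix, ← Finset.mul_prod_erase _ _ (Finset.mem_univ k)]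
  congr 1
  · simp
  · exact Finset.prod_congr rfl fun j hj => by simp [Finset.ne_of_mem_erase hj]

theorem kronMatrix_mulVec_basisVec_zero {n : ℕ} {B : Fin n → Matrix (Fin 2) (Fin 2) ℂ}
    (hB : ∀ k, B k 1 0 = 0) :
    kronMatrix n B *ᵥ basisVec n (fun _ => 0) = (∏ k, B k 0 0) • basisVec n (fun _ => 0) := by
  ext s
  rw [basisVec_eq_single, mulVec_single_one]
  by_cases hs : s = fun _ => 0
  · simp [kronMatrix, hs]
  obtain ⟨k, hk⟩ := Function.ne_iff.mp hs
  have hk1 : s k = 1 := Fin.eq_one_of_ne_zero _ hk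
  simp [kronMatrix, hs, Finset.prod_eq_zero (Finset.mem_univ k), hk1, hB]

theorem kronMatrix_mulVec_eVec {n : ℕ} {B : Fin n → Matrix (Fin 2) (Fin 2) ℂ}
    (hB : ∀ k, B k 1 0 = 0) (k : Fin n) :
    kronMatrix n B *ᵥ eVec n k =
      (B k 0 1 * ∏ j ∈ Finset.univ.erase k, B j 0 0) • basisVec n (fun _ => 0)
        + (B k 1 1 * ∏ j ∈ Finset.univ.erase k, B j 0 0) • eVec n k := by
  ext s
  rw [eVec_eq_basisVec_single, basisVec_eq_single, basisVec_eq_single, mulVec_single_one]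
  simp only [col_apply, kronMatrix_apply_single, Pi.add_apply, Pi.smul_apply, smul_eq_mul,
    Pi.single_apply]
  by_cases hs : ∀ j ≠ k, s j = 0
  · rw [Finset.prod_congr rfl fun j hj => by rw [hs j (Finset.ne_of_mem_erase hj)]]
    rcases Fin.exists_fin_two.mp ⟨s k, rfl⟩ with hk | hk
    · have h0 : s = fun _ => 0 := funext fun j => by
        by_cases hjk : j = k
        · rw [hjk, hk]
        · exact hs j hjk
      have h1 : s ≠ Pi.single k 1 := fun h => by simp [h] at hk
      rw [if_pos h0, if_neg h1, hk]
      ring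
    · have h1 : s = Pi.single k 1 := funext fun j => by
        by_cases hjk : j = k
        · rw [hjk, hk]; simp
        · simp [hs j hjk, hjk]
      have h0 : s ≠ fun _ => 0 := fun h => by simp [h] at hk
      rw [if_neg h0, if_pos h1, hk]
      ring
  · obtain ⟨j, hjk, hj⟩ : ∃ j ≠ k, s j ≠ 0 := by simpa using hs
    have hz : ∏ j ∈ Finset.univ.erase k, B j (s j) 0 = 0 :=
      Finset.prod_eq_zero (Finset.mem_erase.mpr ⟨hjk, Finset.mem_univ j⟩)
        (by rw [Fin.eq_one_of_ne_zero _ hj, hB])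
    have h0 : s ≠ fun _ => 0 := fun h => hj (congrFun h j)
    have h1 : s ≠ Pi.single k 1 := fun h => hj (by simp [h, hjk])
    simp [hz, h0, h1]

def wForm (n : ℕ) (y : ℂ) (z : Fin n → ℂ) : (Fin n → Fin 2) → ℂ :=
  y • basisVec n (fun _ => 0) + ∑ k, z k • eVec n k

theorem wState_eq_wForm (n : ℕ) :
    wState n = wForm n 0 (fun _ => ((1 / Real.sqrt n : ℝ) : ℂ)) := by
  simp [wState, wForm, Finset.smul_sum]

theorem kronMatrix_mulVec_wForm {n : ℕ} {B : Fin n → Matrix (Fin 2) (Fin 2) ℂ}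
    (hB : ∀ k, B k 1 0 = 0) (y : ℂ) (z : Fin n → ℂ) :
    kronMatrix n B *ᵥ wForm n y z =
      wForm n (y * ∏ k, B k 0 0 + ∑ k, z k * B k 0 1 * ∏ j ∈ Finset.univ.erase k, B j 0 0)
        (fun k => z k * B k 1 1 * ∏ j ∈ Finset.univ.erase k, B j 0 0) := by
  simp only [wForm, mulVec_add, mulVec_smul, mulVec_sum, kronMatrix_mulVec_basisVec_zero hB,
    kronMatrix_mulVec_eVec hB, smul_add, Finset.sum_add_distrib, smul_smul, add_smul,
    Finset.sum_smul, mul_assoc]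
  abel

theorem sum_normSq_wForm (n : ℕ) (y : ℂ) (z : Fin n → ℂ) :
    ∑ s, Complex.normSq (wForm n y z s) = Complex.normSq y + ∑ k, Complex.normSq (z k) := by
  let label : Option (Fin n) → Fin n → Fin 2 := fun o => o.elim (fun _ => 0) (Pi.single · 1)
  have h_label : label.Injective := by
    rintro (_ | k) (_ | l) h
    · rfl
    · simpa [label] using congrFun h l
    · simpa [label] using congrFun h k
    · simpa [label, Pi.single_apply, eq_comm] using congrFun h k
  have h_wForm : wForm n y z = ∑ o, Pi.single (label o) (o.elim y z) := by
    simp [wForm, Fintype.sum_option, label, eVec_eq_basisVec_single, basisVec_eq_single,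
      ← Pi.single_smul']
  rw [h_wForm, sum_normSq_sum_single h_label, Fintype.sum_option]
  rfl

theorem exists_unitary_kronMatrix_mulVec_wState_eq_wForm {n : ℕ} (hn : n ≠ 0)
    {A : Fin n → Matrix (Fin 2) (Fin 2) ℂ} (hA : ∀ k, IsUnit (A k)) :
    ∃ V : Fin n → Matrix (Fin 2) (Fin 2) ℂ, (∀ k, V k ∈ unitaryGroup (Fin 2) ℂ) ∧
      ∃ y z, (∀ k, z k ≠ 0) ∧ kronMatrix n V *ᵥ (kronMatrix n A *ᵥ wState n) = wForm n y z := by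
  choose V hV h10 using fun k => exists_mem_unitaryGroup_mul_apply_one_zero (A k)
  have hdiag (k : Fin n) := ne_zero_and_ne_zero_of_isUnit_of_apply_one_zero
    ((Unitary.isUnit_coe (U := ⟨V k, hV k⟩)).mul (hA k)) (h10 k)
  refine ⟨V, hV, _, _, fun k => ?_, by
    rw [mulVec_mulVec, ← kronMatrix_mul, wState_eq_wForm, kronMatrix_mulVec_wForm h10]⟩
  have hn' : (1 / Real.sqrt n : ℝ) ≠ 0 := by positivity
  exact mul_ne_zero (mul_ne_zero (by exact_mod_cast hn') (hdiag k).2)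
    (Finset.prod_ne_zero_iff.mpr fun j _ => (hdiag j).1)

theorem exists_unitary_kronMatrix_mulVec_wForm_eq_norm {n : ℕ} (hn : n ≠ 0) (y : ℂ)
    (z : Fin n → ℂ) :
    ∃ D : Fin n → Matrix (Fin 2) (Fin 2) ℂ, (∀ k, D k ∈ unitaryGroup (Fin 2) ℂ) ∧
      kronMatrix n D *ᵥ wForm n y z = wForm n ‖y‖ (fun k => ‖z k‖) := by
  obtain ⟨p, hp, hpy⟩ := Complex.exists_norm_eq_one_mul_eq_norm y
  let u : Fin n → ℂ := Pi.mulSingle ⟨0, Nat.pos_of_ne_zero hn⟩ p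
  have hu (k : Fin n) : ‖u k‖ = 1 := by
    by_cases hk : k = ⟨0, Nat.pos_of_ne_zero hn⟩ <;> simp [u, hk, hp]
  -- `diagonal ![u k, v k]` scales `|0⋯0⟩` by `∏ u` and `|e_k⟩` by `v k * ∏_{j ≠ k} u j`
  choose v hv hvz using fun k => Complex.exists_norm_eq_one_mul_eq_norm
    (z k * ∏ j ∈ Finset.univ.erase k, u j)
  refine ⟨fun k => diagonal ![u k, v k], fun k => diagonal_mem_unitaryGroup ?_, ?_⟩
  · intro i
    fin_cases i <;> simp [hu, hv]
  rw [kronMatrix_mulVec_wForm (by simp)]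
  congr 1
  · simp [u, mul_comm y, hpy]
  · ext k
    simp only [diagonal_apply_eq, Matrix.cons_val_zero, Matrix.cons_val_one]
    rw [mul_right_comm, mul_comm, hvz, norm_mul, norm_prod, Finset.prod_eq_one fun j _ => hu j,
      mul_one]

/-- Lemma 1 of the paper: every W-type pure state, i.e. every unit vector of the form
`(A 0 ⊗ ⋯ ⊗ A (n-1)) |W_n⟩` with all `A k` invertible, is mapped by a local unitary
`U 0 ⊗ ⋯ ⊗ U (n-1)` to a state `√x |0⋯0⟩ + ∑_k √(c k) |e_k⟩` with `x ≥ 0`, `c k > 0`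
and `x + ∑_k c k = 1`. -/
theorem w_type_canonical_form (n : ℕ) (hn : 3 ≤ n)
    (A : Fin n → Matrix (Fin 2) (Fin 2) ℂ) (hA : ∀ k, IsUnit (A k))
    (ψ : (Fin n → Fin 2) → ℂ)
    (hψ : ψ = (kronMatrix n A).mulVec (wState n))
    (hunit : ∑ s, Complex.normSq (ψ s) = 1) :
    ∃ U : Fin n → Matrix (Fin 2) (Fin 2) ℂ,
      (∀ k, U k ∈ Matrix.unitaryGroup (Fin 2) ℂ) ∧
      ∃ x : ℝ, 0 ≤ x ∧ ∃ c : Fin n → ℝ, (∀ k, 0 < c k) ∧ x + ∑ k, c k = 1 ∧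
        (kronMatrix n U).mulVec ψ =
          ((Real.sqrt x : ℝ) : ℂ) • basisVec n (fun _ => 0)
            + ∑ k, ((Real.sqrt (c k) : ℝ) : ℂ) • eVec n k := by
  obtain ⟨V, hV, y, z, hz, hVψ⟩ := exists_unitary_kronMatrix_mulVec_wState_eq_wForm (by omega) hA
  obtain ⟨D, hD, hDw⟩ := exists_unitary_kronMatrix_mulVec_wForm_eq_norm (by omega) y z
  have hU (k : Fin n) : D k * V k ∈ unitaryGroup (Fin 2) ℂ := mul_mem (hD k) (hV k)
  have hUψ : kronMatrix n (fun k => D k * V k) *ᵥ ψ = wForm n ‖y‖ (fun k => ‖z k‖) := by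
    rw [kronMatrix_mul, ← mulVec_mulVec, hψ, hVψ, hDw]
  refine ⟨_, hU, ‖y‖ ^ 2, by positivity, fun k => ‖z k‖ ^ 2,
    fun k => pow_pos (norm_pos_iff.mpr (hz k)) 2, ?_, ?_⟩
  · calc ‖y‖ ^ 2 + ∑ k, ‖z k‖ ^ 2
        = ∑ s, Complex.normSq ((kronMatrix n (fun k => D k * V k) *ᵥ ψ) s) := by
          rw [hUψ, sum_normSq_wForm]
          simp [Complex.normSq_eq_norm_sq]
      _ = 1 := by
          rw [sum_normSq_mulVec_of_mem_unitaryGroup (kronMatrix_mem_unitaryGroup hU), hunit]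
  · simp [hUψ, wForm]
end
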